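/- arXiv:1908.07301 — 9 statements merged into one kernel-verified Lean document; each statement's English description precedes it below -/
import Mathlib

section
/- Under unconfoundedness, the law of the potential outcome ρ(V,X,t) satisfies the adjustment formula: P(ρ(V,X,t) ≤ r) = Σ_x P(R ≤ r | X = x, T = t) P(X = x), where R = ρ(V,X,T), T = τ(U,X). -/
open MeasureTheory ProbabilityTheory

/-- Adjustment formula: under unconfoundedness, the law of the potential
outcome `ρ(V,X,t)` satisfies
`P(ρ(V,X,t) ≤ r) = Σ_x P(R ≤ r | X = x, T = t) · P(X = x)`. -/
theorem adjustment_formula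
    {Ω 𝒳 𝒯 : Type*} [MeasurableSpace Ω]
    [MeasurableSpace 𝒳] [MeasurableSingletonClass 𝒳] [Countable 𝒳]
    [MeasurableSpace 𝒯] [MeasurableSingletonClass 𝒯] [Countable 𝒯]
    (μ : Measure Ω) [IsProbabilityMeasure μ]
    (X : Ω → 𝒳) (U V : Ω → ℝ)
    (hX : Measurable X) (hU : Measurable U) (hV : Measurable V)
    (τ : ℝ → 𝒳 → 𝒯) (ρ : ℝ → 𝒳 → 𝒯 → ℝ)
    (hτ : Measurable fun p : ℝ × 𝒳 => τ p.1 p.2)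
    (hρ : Measurable fun p : ℝ × 𝒳 × 𝒯 => ρ p.1 p.2.1 p.2.2)
    (T : Ω → 𝒯) (hT : ∀ ω, T ω = τ (U ω) (X ω))
    (R : Ω → ℝ) (hR : ∀ ω, R ω = ρ (V ω) (X ω) (T ω))
    (t : 𝒯)
    (hpos : ∀ x : 𝒳, 0 < μ {ω | X ω = x} → 0 < μ {ω | X ω = x ∧ T ω = t})
    (hindep : ∀ x : 𝒳, 0 < μ {ω | X ω = x} →
      IndepFun U V (μ[|{ω | X ω = x}]))
    (hUunif : ∀ x : 𝒳, 0 < μ {ω | X ω = x} →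
      (μ[|{ω | X ω = x}]).map U = volume.restrict (Set.Icc (0 : ℝ) 1))
    (hVunif : ∀ x : 𝒳, 0 < μ {ω | X ω = x} →
      (μ[|{ω | X ω = x}]).map V = volume.restrict (Set.Icc (0 : ℝ) 1)) :
    ∀ r : ℝ, μ {ω | ρ (V ω) (X ω) t ≤ r}
      = ∑' x : 𝒳, μ[|{ω | X ω = x ∧ T ω = t}] {ω | R ω ≤ r} * μ {ω | X ω = x} := by
  intro r
  have hSBm : ∀ x : 𝒳, MeasurableSet {u : ℝ | τ u x = t} := by
    intro x
    exact (hτ.comp (measurable_id.prodMk measurable_const)) (measurableSet_singleton t)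
  have hSCm : ∀ x : 𝒳, MeasurableSet {v : ℝ | ρ v x t ≤ r} := by
    intro x
    have hpm : Measurable fun v : ℝ => (v, (x, t)) := measurable_id.prodMk measurable_const
    have hm := hρ.comp hpm
    exact measurableSet_le hm measurable_const
  have hAm : ∀ x : 𝒳, MeasurableSet {ω | X ω = x} := fun x => hX (measurableSet_singleton x)
  have hTm : Measurable T := by
    have h : T = fun ω => τ (U ω) (X ω) := funext hT
    rw [h]; exact hτ.comp (hU.prodMk hX)
  -- partition of the LHS
  have hpart : {ω | ρ (V ω) (X ω) t ≤ r}
      = ⋃ x : 𝒳, ({ω | X ω = x} ∩ V ⁻¹' {v | ρ v x t ≤ r}) := by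
    ext ω
    simp only [Set.mem_iUnion, Set.mem_inter_iff, Set.mem_setOf_eq, Set.mem_preimage]
    constructor
    · intro h; exact ⟨X ω, rfl, h⟩
    · rintro ⟨x, hx, h⟩; rw [hx]; exact h
  rw [hpart, measure_iUnion ?_ ?_]
  · refine tsum_congr fun x => ?_
    by_cases hx : μ {ω | X ω = x} = 0
    · rw [hx, mul_zero]
      refine le_antisymm ?_ (zero_le)
      rw [← hx]
      exact measure_mono (Set.inter_subset_left)
    · have hxpos : 0 < μ {ω | X ω = x} := pos_iff_ne_zero.mpr hx
      have hat : μ {ω | X ω = x} ≠ ⊤ := measure_ne_top μ _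
      have hDeq : {ω | X ω = x ∧ T ω = t}
          = {ω | X ω = x} ∩ U ⁻¹' {u | τ u x = t} := by
        ext ω
        simp only [Set.mem_inter_iff, Set.mem_setOf_eq, Set.mem_preimage]
        constructor
        · rintro ⟨h1, h2⟩; exact ⟨h1, by rw [← h2, hT ω, h1]⟩
        · rintro ⟨h1, h2⟩; exact ⟨h1, by rw [hT ω, h1]; exact h2⟩
      have hDCeq : {ω | X ω = x ∧ T ω = t} ∩ {ω | R ω ≤ r}
          = {ω | X ω = x} ∩ (U ⁻¹' {u | τ u x = t} ∩ V ⁻¹' {v | ρ v x t ≤ r}) := by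
        ext ω
        simp only [Set.mem_inter_iff, Set.mem_setOf_eq, Set.mem_preimage]
        constructor
        · rintro ⟨⟨h1, h2⟩, h3⟩
          refine ⟨h1, by rw [← h2, hT ω, h1], ?_⟩
          rw [hR ω, h1, h2] at h3; exact h3
        · rintro ⟨h1, h2, h3⟩
          have ht' : T ω = t := by rw [hT ω, h1]; exact h2
          exact ⟨⟨h1, ht'⟩, by rw [hR ω, h1, ht']; exact h3⟩
      have hDm : MeasurableSet {ω | X ω = x ∧ T ω = t} := by
        rw [hDeq]; exact (hAm x).inter (hU (hSBm x))
      have hcond : ∀ s : Set Ω, μ ({ω | X ω = x} ∩ s) = μ {ω | X ω = x} * μ[|{ω | X ω = x}] s := by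
        intro s
        rw [cond_apply (hAm x) μ s, ← mul_assoc, ENNReal.mul_inv_cancel hx hat, one_mul]
      have hindep' := (hindep x hxpos).measure_inter_preimage_eq_mul
        {u | τ u x = t} {v | ρ v x t ≤ r} (hSBm x) (hSCm x)
      have hDval : μ {ω | X ω = x ∧ T ω = t}
          = μ {ω | X ω = x} * μ[|{ω | X ω = x}] (U ⁻¹' {u | τ u x = t}) := by
        rw [hDeq, hcond]
      have hDne : μ {ω | X ω = x ∧ T ω = t} ≠ 0 := (hpos x hxpos).ne'
      have hDnetop : μ {ω | X ω = x ∧ T ω = t} ≠ ⊤ := measure_ne_top _ _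
      rw [cond_apply hDm μ, hDCeq, hcond, hcond, hindep', ← mul_assoc (μ {ω | X ω = x}),
        ← hDval, ← mul_assoc, ENNReal.inv_mul_cancel hDne hDnetop, one_mul, mul_comm]
  · intro i j hij
    simp only [Function.onFun, Set.disjoint_left]
    rintro ω ⟨h1, -⟩ ⟨h2, -⟩
    exact hij (h1.symm.trans h2)
  · intro x
    exact (hAm x).inter (hV (hSCm x))
end

section
/- Instrumental-variable identification (binary case): Let R = ρ(ε,T) and T = τ(δ,I) with I binary, T binary, I independent of (δ,ε), and τ monotone in its second argument (τ(d,0) ≤ τ(d,1) for all d). If P(τ(δ,1) > τ(δ,0)) > 0, then E(R|I=1) − E(R|I=0) = E[(ρ(ε,1) − ρ(ε,0)) 1{τ(δ,1) − τ(δ,0) = 1}] and E(T|I=1) − E(T|I=0) = P(τ(δ,1) − τ(δ,0) = 1); hence θ := [E(R|I=1) − E(R|I=0)]/[E(T|I=1) − E(T|I=0)] = E[ρ(ε,1) − ρ(ε,0) | τ(δ,1) = 1, τ(δ,0) = 0]. -/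
open MeasureTheory ProbabilityTheory

private lemma bdd_integrable {Ω : Type*} [MeasurableSpace Ω] {μ : Measure Ω}
    [IsFiniteMeasure μ] {f : Ω → ℝ} (hf : Measurable f) {C : ℝ} (hC : ∀ ω, |f ω| ≤ C) :
    Integrable f μ :=
  ⟨hf.aestronglyMeasurable,
    HasFiniteIntegral.of_bounded (C := C) (ae_of_all _ fun ω => by
      simpa [Real.norm_eq_abs] using hC ω)⟩

/-- Key lemma: conditional expectation given `I = i` of a function of `X`
independent of `I` equals its unconditional expectation. -/
private lemma cond_integral_indep {Ω Γ : Type*} [MeasurableSpace Ω] [MeasurableSpace Γ]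
    (μ : Measure Ω) [IsProbabilityMeasure μ]
    (I : Ω → Fin 2) (X : Ω → Γ) (hI : Measurable I) (hX : Measurable X)
    (hindep : IndepFun I X μ) (g : Γ → ℝ) (hg : Measurable g)
    (C : ℝ) (hC : ∀ x, |g x| ≤ C) (i : Fin 2) (hi : 0 < μ {ω | I ω = i})
    (f : Ω → ℝ) (hf : ∀ ω, I ω = i → f ω = g (X ω)) :
    ∫ ω, f ω ∂μ[|{ω | I ω = i}] = ∫ ω, g (X ω) ∂μ := by
  set s : Set Ω := {ω | I ω = i} with hs_def
  have hs : MeasurableSet s := hI (measurableSet_singleton i)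
  have hμs_ne : μ s ≠ 0 := hi.ne'
  have hμs_top : μ s ≠ ⊤ := measure_ne_top μ s
  have hset : ∫ ω in s, f ω ∂μ = ∫ ω in s, g (X ω) ∂μ :=
    setIntegral_congr_fun hs fun ω hω => hf ω hω
  have hφ : Measurable (fun j : Fin 2 => if j = i then (1:ℝ) else 0) :=
    measurable_of_countable _
  have hindep' : IndepFun (fun ω => if I ω = i then (1:ℝ) else 0) (fun ω => g (X ω)) μ :=
    hindep.comp hφ hg
  have hmul : ∫ ω, (if I ω = i then (1:ℝ) else 0) * g (X ω) ∂μ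
      = (∫ ω, (if I ω = i then (1:ℝ) else 0) ∂μ) * ∫ ω, g (X ω) ∂μ :=
    hindep'.integral_mul_eq_mul_integral
      ((hφ.comp hI).aestronglyMeasurable) ((hg.comp hX).aestronglyMeasurable)
  have hind1 : (fun ω => (if I ω = i then (1:ℝ) else 0)) = s.indicator (fun _ => (1:ℝ)) := by
    funext ω; simp [Set.indicator_apply, hs_def]
  have hind2 : (fun ω => (if I ω = i then (1:ℝ) else 0) * g (X ω))
      = s.indicator (fun ω => g (X ω)) := by
    funext ω; simp [Set.indicator_apply, hs_def]
  have h1 : ∫ ω, (if I ω = i then (1:ℝ) else 0) ∂μ = (μ s).toReal := by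
    rw [hind1]
    exact integral_indicator_one hs (μ := μ)
  have h2 : ∫ ω, (if I ω = i then (1:ℝ) else 0) * g (X ω) ∂μ = ∫ ω in s, g (X ω) ∂μ := by
    rw [hind2, integral_indicator hs]
  rw [ProbabilityTheory.cond, integral_smul_measure, hset, ← h2, hmul, h1, smul_eq_mul,
    ENNReal.toReal_inv, ← mul_assoc, inv_mul_cancel₀, one_mul]
  exact ENNReal.toReal_ne_zero.2 ⟨hμs_ne, hμs_top⟩

/-- Instrumental-variable identification (binary case): with `T = τ(δ,I)`,
`R = ρ(ε,T)`, `I` independent of `(δ,ε)` and `τ` monotone in the instrument,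
the Wald ratio equals the average treatment effect among compliers. -/
theorem instrumental_variable_identification
    {Ω Δ E : Type*} [MeasurableSpace Ω] [MeasurableSpace Δ] [MeasurableSpace E]
    (μ : Measure Ω) [IsProbabilityMeasure μ]
    (I : Ω → Fin 2) (δ : Ω → Δ) (ε : Ω → E)
    (hI : Measurable I) (hδ : Measurable δ) (hε : Measurable ε)
    (τ : Δ → Fin 2 → ℝ) (ρ : E → ℝ → ℝ)
    (hτmeas : Measurable fun p : Δ × Fin 2 => τ p.1 p.2)
    (hρmeas : Measurable fun p : E × ℝ => ρ p.1 p.2)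
    (hρbdd : ∃ C : ℝ, ∀ e t, |ρ e t| ≤ C)
    (hτbin : ∀ d i, τ d i = 0 ∨ τ d i = 1)
    (hτmono : ∀ d, τ d 0 ≤ τ d 1)
    (T : Ω → ℝ) (hT : ∀ ω, T ω = τ (δ ω) (I ω))
    (R : Ω → ℝ) (hR : ∀ ω, R ω = ρ (ε ω) (T ω))
    (hindep : IndepFun I (fun ω => (δ ω, ε ω)) μ)
    (hI1 : 0 < μ {ω | I ω = 1}) (hI0 : 0 < μ {ω | I ω = 0})
    (hcompl : 0 < μ {ω | τ (δ ω) 1 = 1 ∧ τ (δ ω) 0 = 0}) :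
    ((∫ ω, R ω ∂μ[|{ω | I ω = 1}]) - ∫ ω, R ω ∂μ[|{ω | I ω = 0}]
        = ∫ ω, (if τ (δ ω) 1 - τ (δ ω) 0 = 1 then ρ (ε ω) 1 - ρ (ε ω) 0 else 0) ∂μ) ∧
    ((∫ ω, T ω ∂μ[|{ω | I ω = 1}]) - ∫ ω, T ω ∂μ[|{ω | I ω = 0}]
        = (μ {ω | τ (δ ω) 1 - τ (δ ω) 0 = 1}).toReal) ∧
    (((∫ ω, R ω ∂μ[|{ω | I ω = 1}]) - ∫ ω, R ω ∂μ[|{ω | I ω = 0}]) /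
        ((∫ ω, T ω ∂μ[|{ω | I ω = 1}]) - ∫ ω, T ω ∂μ[|{ω | I ω = 0}])
      = ∫ ω, (ρ (ε ω) 1 - ρ (ε ω) 0)
          ∂μ[|{ω | τ (δ ω) 1 = 1 ∧ τ (δ ω) 0 = 0}]) := by
  obtain ⟨C, hC⟩ := hρbdd
  set X : Ω → Δ × E := fun ω => (δ ω, ε ω) with hX_def
  have hX : Measurable X := hδ.prodMk hε
  -- measurability of d ↦ τ d i
  have hτi : ∀ i : Fin 2, Measurable fun d => τ d i := fun i =>
    hτmeas.comp (measurable_id.prodMk measurable_const)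
  -- g functions
  set gR : Fin 2 → Δ × E → ℝ := fun i p => ρ p.2 (τ p.1 i) with hgR_def
  have hgRmeas : ∀ i, Measurable (gR i) := fun i =>
    hρmeas.comp ((measurable_snd).prodMk ((hτi i).comp measurable_fst))
  have hgRbd : ∀ i p, |gR i p| ≤ C := fun i p => hC _ _
  set gT : Fin 2 → Δ × E → ℝ := fun i p => τ p.1 i with hgT_def
  have hgTmeas : ∀ i, Measurable (gT i) := fun i => (hτi i).comp measurable_fst
  have hτbd : ∀ d i, |τ d i| ≤ 1 := by
    intro d i; rcases hτbin d i with h | h <;> simp [h]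
  have hgTbd : ∀ i p, |gT i p| ≤ 1 := fun i p => hτbd _ _
  -- conditional expectations
  have hRc : ∀ i : Fin 2, 0 < μ {ω | I ω = i} →
      ∫ ω, R ω ∂μ[|{ω | I ω = i}] = ∫ ω, gR i (X ω) ∂μ := by
    intro i hi
    exact cond_integral_indep μ I X hI hX hindep (gR i) (hgRmeas i) C (hgRbd i) i hi R
      (fun ω hω => by simp [hR, hT, hω, hgR_def, hX_def])
  have hTc : ∀ i : Fin 2, 0 < μ {ω | I ω = i} →
      ∫ ω, T ω ∂μ[|{ω | I ω = i}] = ∫ ω, gT i (X ω) ∂μ := by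
    intro i hi
    exact cond_integral_indep μ I X hI hX hindep (gT i) (hgTmeas i) 1 (hgTbd i) i hi T
      (fun ω hω => by simp [hT, hω, hgT_def, hX_def])
  -- integrability
  have hintR : ∀ i : Fin 2, Integrable (fun ω => gR i (X ω)) μ := fun i =>
    bdd_integrable ((hgRmeas i).comp hX) (fun ω => hgRbd i _)
  have hintT : ∀ i : Fin 2, Integrable (fun ω => gT i (X ω)) μ := fun i =>
    bdd_integrable ((hgTmeas i).comp hX) (fun ω => hτbd _ _)
  -- the complier set
  set S : Set Ω := {ω | τ (δ ω) 1 - τ (δ ω) 0 = 1} with hS_def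
  set S' : Set Ω := {ω | τ (δ ω) 1 = 1 ∧ τ (δ ω) 0 = 0} with hS'_def
  have hSS' : S = S' := by
    ext ω
    simp only [hS_def, hS'_def, Set.mem_setOf_eq]
    rcases hτbin (δ ω) 1 with h1 | h1 <;> rcases hτbin (δ ω) 0 with h0 | h0 <;>
      simp [h1, h0] <;> norm_num
  have hSmeas : MeasurableSet S :=
    (((hτi 1).comp hδ).sub ((hτi 0).comp hδ)) (measurableSet_singleton (1:ℝ))
  -- part 1
  have key1 : (fun ω => gR 1 (X ω) - gR 0 (X ω))
      = fun ω => (if τ (δ ω) 1 - τ (δ ω) 0 = 1 then ρ (ε ω) 1 - ρ (ε ω) 0 else 0) := by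
    funext ω
    simp only [hgR_def, hX_def]
    rcases hτbin (δ ω) 1 with h1 | h1 <;> rcases hτbin (δ ω) 0 with h0 | h0
    · simp [h1, h0]
    · exact absurd (hτmono (δ ω)) (by rw [h1, h0]; norm_num)
    · simp [h1, h0]
    · simp [h1, h0]
  have part1 : (∫ ω, R ω ∂μ[|{ω | I ω = 1}]) - ∫ ω, R ω ∂μ[|{ω | I ω = 0}]
      = ∫ ω, (if τ (δ ω) 1 - τ (δ ω) 0 = 1 then ρ (ε ω) 1 - ρ (ε ω) 0 else 0) ∂μ := by
    rw [hRc 1 hI1, hRc 0 hI0, ← integral_sub (hintR 1) (hintR 0)]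
    exact integral_congr_ae (ae_of_all _ fun ω => congrFun key1 ω)
  -- part 2
  have key2 : (fun ω => gT 1 (X ω) - gT 0 (X ω)) = S.indicator (fun _ => (1:ℝ)) := by
    funext ω
    simp only [hgT_def, hX_def, Set.indicator_apply, hS_def, Set.mem_setOf_eq]
    rcases hτbin (δ ω) 1 with h1 | h1 <;> rcases hτbin (δ ω) 0 with h0 | h0
    · simp [h1, h0]
    · exact absurd (hτmono (δ ω)) (by rw [h1, h0]; norm_num)
    · simp [h1, h0]
    · simp [h1, h0]
  have part2 : (∫ ω, T ω ∂μ[|{ω | I ω = 1}]) - ∫ ω, T ω ∂μ[|{ω | I ω = 0}]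
      = (μ S).toReal := by
    rw [hTc 1 hI1, hTc 0 hI0, ← integral_sub (hintT 1) (hintT 0)]
    rw [show (fun ω => gT 1 (X ω) - gT 0 (X ω)) = S.indicator (fun _ => (1:ℝ)) from key2]
    exact integral_indicator_one hSmeas (μ := μ)
  -- part 3
  have hμS_ne : μ S ≠ 0 := by rw [hSS']; exact hcompl.ne'
  have hμS_top : μ S ≠ ⊤ := measure_ne_top μ S
  have hnum : ∫ ω, (if τ (δ ω) 1 - τ (δ ω) 0 = 1 then ρ (ε ω) 1 - ρ (ε ω) 0 else 0) ∂μ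
      = ∫ ω in S, (ρ (ε ω) 1 - ρ (ε ω) 0) ∂μ := by
    rw [← integral_indicator hSmeas]
    refine integral_congr_ae (ae_of_all _ fun ω => ?_)
    simp [Set.indicator_apply, hS_def]
  have part3 : ∫ ω, (ρ (ε ω) 1 - ρ (ε ω) 0) ∂μ[|S']
      = (∫ ω in S, (ρ (ε ω) 1 - ρ (ε ω) 0) ∂μ) / (μ S).toReal := by
    rw [← hSS', ProbabilityTheory.cond, integral_smul_measure, smul_eq_mul,
      ENNReal.toReal_inv, div_eq_inv_mul]
  refine ⟨part1, part2, ?_⟩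
  rw [part1, part2, hnum, part3]
end

section
/- For the instrumental-variables denominator: under the monotonicity assumption τ(δ,0) ≤ τ(δ,1) with τ binary-valued and I independent of δ, E(T|I=1) − E(T|I=0) = P(τ(δ,1) = 1 and τ(δ,0) = 0), where T = τ(δ,I). -/
/-!
Conditioning on `I = i` does not change the law of the independent `δ`, so
`E(T | I = i) = E τ(δ, i)`. Hence the difference of the two conditional means is
`E[τ(δ, 1) - τ(δ, 0)]`, and by monotonicity of the binary `τ` this difference is the indicator
of the compliers `{τ(δ, 1) = 1 ∧ τ(δ, 0) = 0}`.
-/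

open MeasureTheory ProbabilityTheory

section Conditioning

variable {Ω α β : Type*} {_ : MeasurableSpace Ω} [MeasurableSpace α] [MeasurableSpace β]
  {μ : Measure Ω} [IsFiniteMeasure μ] {X : Ω → α} {Y : Ω → β} {s : Set α}

theorem ProbabilityTheory.IndepFun.map_cond_preimage (hXY : IndepFun X Y μ) (hX : Measurable X)
    (hY : Measurable Y) (hs : MeasurableSet s) (hμs : μ (X ⁻¹' s) ≠ 0) :
    (μ[|X ⁻¹' s]).map Y = μ.map Y := by
  ext t ht
  rw [Measure.map_apply hY ht, Measure.map_apply hY ht, cond_apply (hX hs),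
    hXY.measure_inter_preimage_eq_mul s t hs ht, ← mul_assoc,
    ENNReal.inv_mul_cancel hμs (measure_ne_top μ _), one_mul]

theorem ProbabilityTheory.IndepFun.integral_comp_cond_preimage {E : Type*}
    [NormedAddCommGroup E] [NormedSpace ℝ E] (hXY : IndepFun X Y μ) (hX : Measurable X)
    (hY : Measurable Y) (hs : MeasurableSet s) (hμs : μ (X ⁻¹' s) ≠ 0) {f : β → E}
    (hf : AEStronglyMeasurable f (μ.map Y)) :
    ∫ ω, f (Y ω) ∂μ[|X ⁻¹' s] = ∫ ω, f (Y ω) ∂μ := by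
  have hf' : AEStronglyMeasurable f ((μ[|X ⁻¹' s]).map Y) := by
    rwa [hXY.map_cond_preimage hX hY hs hμs]
  rw [← integral_map hY.aemeasurable hf', hXY.map_cond_preimage hX hY hs hμs,
    integral_map hY.aemeasurable hf]

end Conditioning

theorem sub_eq_ite_of_binary_of_le {a b : ℝ} (ha : a = 0 ∨ a = 1) (hb : b = 0 ∨ b = 1)
    (hab : a ≤ b) : b - a = if b = 1 ∧ a = 0 then 1 else 0 := by
  rcases ha with rfl | rfl <;> rcases hb with rfl | rfl <;> norm_num at *

/-- The instrumental-variables denominator: under monotonicity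
`τ(δ,0) ≤ τ(δ,1)` with `τ` binary-valued and `I` independent of `δ`,
`E(T|I=1) - E(T|I=0) = P(τ(δ,1) = 1 ∧ τ(δ,0) = 0)`, where `T = τ(δ,I)`. -/
theorem instrumental_variable_denominator
    {Ω Δ : Type*} [MeasurableSpace Ω] [MeasurableSpace Δ]
    (μ : Measure Ω) [IsProbabilityMeasure μ]
    (I : Ω → Fin 2) (δ : Ω → Δ)
    (hI : Measurable I) (hδ : Measurable δ)
    (τ : Δ → Fin 2 → ℝ)
    (hτmeas : Measurable fun p : Δ × Fin 2 => τ p.1 p.2)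
    (hτbin : ∀ d i, τ d i = 0 ∨ τ d i = 1)
    (hτmono : ∀ d, τ d 0 ≤ τ d 1)
    (T : Ω → ℝ) (hT : ∀ ω, T ω = τ (δ ω) (I ω))
    (hindep : IndepFun I δ μ)
    (hI1 : 0 < μ {ω | I ω = 1}) (hI0 : 0 < μ {ω | I ω = 0}) :
    (∫ ω, T ω ∂μ[|{ω | I ω = 1}]) - ∫ ω, T ω ∂μ[|{ω | I ω = 0}]
      = (μ {ω | τ (δ ω) 1 = 1 ∧ τ (δ ω) 0 = 0}).toReal := by
  have hτ : ∀ i, Measurable fun d => τ d i := fun i =>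
    hτmeas.comp (measurable_id.prodMk measurable_const)
  have hint : ∀ i, Integrable (fun ω => τ (δ ω) i) μ := fun i =>
    .of_bound ((hτ i).comp hδ).aestronglyMeasurable 1 <| .of_forall fun ω => by
      rcases hτbin (δ ω) i with h | h <;> simp [h]
  have hcond : ∀ i, 0 < μ {ω | I ω = i} →
      ∫ ω, T ω ∂μ[|{ω | I ω = i}] = ∫ ω, τ (δ ω) i ∂μ := fun i hpos => by
    have hs : MeasurableSet {ω | I ω = i} := hI (measurableSet_singleton i)
    calc ∫ ω, T ω ∂μ[|{ω | I ω = i}] = ∫ ω, τ (δ ω) i ∂μ[|I ⁻¹' {i}] :=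
          integral_congr_ae <| (ae_cond_mem hs).mono fun ω hω => by rw [hT, hω.out]
      _ = ∫ ω, τ (δ ω) i ∂μ :=
          hindep.integral_comp_cond_preimage hI hδ (measurableSet_singleton i) hpos.ne'
            (hτ i).aestronglyMeasurable
  have hcompliers : (fun ω => τ (δ ω) 1 - τ (δ ω) 0)
      = {ω | τ (δ ω) 1 = 1 ∧ τ (δ ω) 0 = 0}.indicator 1 := funext fun ω => by
    rw [Set.indicator_apply]
    exact sub_eq_ite_of_binary_of_le (hτbin _ 0) (hτbin _ 1) (hτmono _)
  have hS : MeasurableSet {ω | τ (δ ω) 1 = 1 ∧ τ (δ ω) 0 = 0} :=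
    (((hτ 1).comp hδ) (measurableSet_singleton 1)).inter
      (((hτ 0).comp hδ) (measurableSet_singleton 0))
  rw [hcond 1 hI1, hcond 0 hI0, ← integral_sub (hint 1) (hint 0), hcompliers,
    integral_indicator_one hS, measureReal_def]
end

section
/- Conditional independence implied by a second-level causal model: if X₁ = φ₁(U₁), X₂ = φ₂(U₂), X₃ = φ₃(U₃,X₁,X₂), X₄ = φ₄(U₄,X₁) with U₁,...,U₄ independent, then X₃ and X₄ are independent conditionally on X₁, i.e. P(X₄ = x₄ | X₁ = x₁, X₃ = x₃) = P(X₄ = x₄ | X₁ = x₁) whenever P(X₁=x₁, X₃=x₃) > 0. -/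
open MeasureTheory ProbabilityTheory

/-! With `Y = (U₁, U₄)` and `Z = (U₂, U₃)`, which are independent, the events `{X₁ = x₁}` and
`{X₄ = x₄}` are determined by `Y`, while on `{X₁ = x₁}` the event `{X₃ = x₃}` coincides with an
event determined by `Z`. Conditioning additionally on an event of positive probability that is
independent of `Y` does not change conditional probabilities of `Y`-events. -/

theorem ProbabilityTheory.IndepFun.cond_inter_preimage_eq_cond
    {Ω β γ : Type*} [MeasurableSpace Ω] [MeasurableSpace β] [MeasurableSpace γ]
    {μ : Measure Ω} [IsFiniteMeasure μ] {Y : Ω → β} {Z : Ω → γ} (hYZ : IndepFun Y Z μ)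
    (hY : Measurable Y) (hZ : Measurable Z) {s t : Set β} {u : Set γ}
    (hs : MeasurableSet s) (ht : MeasurableSet t) (hu : MeasurableSet u)
    (hu₀ : μ (Z ⁻¹' u) ≠ 0) :
    μ[Y ⁻¹' t | Y ⁻¹' s ∩ Z ⁻¹' u] = μ[Y ⁻¹' t | Y ⁻¹' s] := by
  rw [cond_apply ((hY hs).inter (hZ hu)), cond_apply (hY hs), Set.inter_right_comm,
    ← Set.preimage_inter, hYZ.measure_inter_preimage_eq_mul _ _ hs hu,
    hYZ.measure_inter_preimage_eq_mul _ _ (hs.inter ht) hu, ← ENNReal.div_eq_inv_mul,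
    ← ENNReal.div_eq_inv_mul, ENNReal.mul_div_mul_right _ _ hu₀ (measure_ne_top μ _)]

theorem second_level_conditional_independence_general
    {Ω 𝒳₁ 𝒳₂ 𝒳₃ 𝒳₄ : Type*} [MeasurableSpace Ω]
    [MeasurableSpace 𝒳₁] [MeasurableSingletonClass 𝒳₁]
    [MeasurableSpace 𝒳₂]
    [MeasurableSpace 𝒳₃] [MeasurableSingletonClass 𝒳₃]
    [MeasurableSpace 𝒳₄] [MeasurableSingletonClass 𝒳₄]
    (μ : Measure Ω) [IsProbabilityMeasure μ]
    (U : Fin 4 → Ω → ℝ) (hU : ∀ i, Measurable (U i))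
    (hindep : iIndepFun U μ)
    (φ₁ : ℝ → 𝒳₁) (φ₂ : ℝ → 𝒳₂) (φ₃ : ℝ → 𝒳₁ → 𝒳₂ → 𝒳₃) (φ₄ : ℝ → 𝒳₁ → 𝒳₄)
    (hφ₁ : Measurable φ₁) (hφ₂ : Measurable φ₂)
    (hφ₃ : Measurable fun p : ℝ × 𝒳₁ × 𝒳₂ => φ₃ p.1 p.2.1 p.2.2)
    (hφ₄ : Measurable fun p : ℝ × 𝒳₁ => φ₄ p.1 p.2)
    (X₁ : Ω → 𝒳₁) (hX₁ : ∀ ω, X₁ ω = φ₁ (U 0 ω))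
    (X₂ : Ω → 𝒳₂) (hX₂ : ∀ ω, X₂ ω = φ₂ (U 1 ω))
    (X₃ : Ω → 𝒳₃) (hX₃ : ∀ ω, X₃ ω = φ₃ (U 2 ω) (X₁ ω) (X₂ ω))
    (X₄ : Ω → 𝒳₄) (hX₄ : ∀ ω, X₄ ω = φ₄ (U 3 ω) (X₁ ω)) :
    ∀ (x₁ : 𝒳₁) (x₃ : 𝒳₃) (x₄ : 𝒳₄),
      0 < μ {ω | X₁ ω = x₁ ∧ X₃ ω = x₃} →
      μ[|{ω | X₁ ω = x₁ ∧ X₃ ω = x₃}] {ω | X₄ ω = x₄}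
        = μ[|{ω | X₁ ω = x₁}] {ω | X₄ ω = x₄} := by
  intro x₁ x₃ x₄ hpos
  set Y : Ω → ℝ × ℝ := fun ω => (U 0 ω, U 3 ω)
  set Z : Ω → ℝ × ℝ := fun ω => (U 1 ω, U 2 ω)
  set s : Set (ℝ × ℝ) := {y | φ₁ y.1 = x₁}
  set t : Set (ℝ × ℝ) := {y | φ₄ y.2 (φ₁ y.1) = x₄}
  set u : Set (ℝ × ℝ) := {z | φ₃ z.2 x₁ (φ₂ z.1) = x₃}
  have hYZ : IndepFun Y Z μ :=
    hindep.indepFun_prodMk_prodMk hU 0 3 1 2 (by decide) (by decide) (by decide) (by decide)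
  have hs : MeasurableSet s := hφ₁.comp measurable_fst (measurableSet_singleton x₁)
  have ht : MeasurableSet t :=
    hφ₄.comp (measurable_snd.prodMk (hφ₁.comp measurable_fst)) (measurableSet_singleton x₄)
  have hu : MeasurableSet u :=
    hφ₃.comp (measurable_snd.prodMk (measurable_const.prodMk (hφ₂.comp measurable_fst)))
      (measurableSet_singleton x₃)
  have hX₁s : {ω | X₁ ω = x₁} = Y ⁻¹' s := by ext ω; simp [Y, s, hX₁]
  have hX₄t : {ω | X₄ ω = x₄} = Y ⁻¹' t := by ext ω; simp [Y, t, hX₁, hX₄]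
  have hX₁₃ : {ω | X₁ ω = x₁ ∧ X₃ ω = x₃} = Y ⁻¹' s ∩ Z ⁻¹' u := by
    ext ω
    simp only [Set.mem_ofPred_eq, Set.mem_inter_iff, Set.mem_preimage, Y, Z, s, u, hX₃, hX₂,
      ← hX₁]
    exact and_congr_right fun h => by rw [h]
  have hu₀ : μ (Z ⁻¹' u) ≠ 0 :=
    (measure_mono_null Set.inter_subset_right).mt (hX₁₃ ▸ hpos).ne'
  rw [hX₁₃, hX₁s, hX₄t]
  exact hYZ.cond_inter_preimage_eq_cond ((hU 0).prodMk (hU 3)) ((hU 1).prodMk (hU 2)) hs ht hu hu₀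

/-- Conditional independence implied by a second-level causal model: with
`X₁ = φ₁(U₁)`, `X₂ = φ₂(U₂)`, `X₃ = φ₃(U₃,X₁,X₂)`, `X₄ = φ₄(U₄,X₁)` and
`U₁,...,U₄` independent, `X₃` and `X₄` are independent given `X₁`. -/
theorem second_level_conditional_independence
    {Ω 𝒳₁ 𝒳₂ 𝒳₃ 𝒳₄ : Type*} [MeasurableSpace Ω]
    [MeasurableSpace 𝒳₁] [MeasurableSingletonClass 𝒳₁] [Countable 𝒳₁]
    [MeasurableSpace 𝒳₂] [MeasurableSingletonClass 𝒳₂] [Countable 𝒳₂]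
    [MeasurableSpace 𝒳₃] [MeasurableSingletonClass 𝒳₃] [Countable 𝒳₃]
    [MeasurableSpace 𝒳₄] [MeasurableSingletonClass 𝒳₄] [Countable 𝒳₄]
    (μ : Measure Ω) [IsProbabilityMeasure μ]
    (U : Fin 4 → Ω → ℝ) (hU : ∀ i, Measurable (U i))
    (hindep : iIndepFun U μ)
    (φ₁ : ℝ → 𝒳₁) (φ₂ : ℝ → 𝒳₂) (φ₃ : ℝ → 𝒳₁ → 𝒳₂ → 𝒳₃) (φ₄ : ℝ → 𝒳₁ → 𝒳₄)
    (hφ₁ : Measurable φ₁) (hφ₂ : Measurable φ₂)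
    (hφ₃ : Measurable fun p : ℝ × 𝒳₁ × 𝒳₂ => φ₃ p.1 p.2.1 p.2.2)
    (hφ₄ : Measurable fun p : ℝ × 𝒳₁ => φ₄ p.1 p.2)
    (X₁ : Ω → 𝒳₁) (hX₁ : ∀ ω, X₁ ω = φ₁ (U 0 ω))
    (X₂ : Ω → 𝒳₂) (hX₂ : ∀ ω, X₂ ω = φ₂ (U 1 ω))
    (X₃ : Ω → 𝒳₃) (hX₃ : ∀ ω, X₃ ω = φ₃ (U 2 ω) (X₁ ω) (X₂ ω))
    (X₄ : Ω → 𝒳₄) (hX₄ : ∀ ω, X₄ ω = φ₄ (U 3 ω) (X₁ ω)) :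
    ∀ (x₁ : 𝒳₁) (x₃ : 𝒳₃) (x₄ : 𝒳₄),
      0 < μ {ω | X₁ ω = x₁ ∧ X₃ ω = x₃} →
      μ[|{ω | X₁ ω = x₁ ∧ X₃ ω = x₃}] {ω | X₄ ω = x₄}
        = μ[|{ω | X₁ ω = x₁}] {ω | X₄ ω = x₄} :=
  second_level_conditional_independence_general μ U hU hindep φ₁ φ₂ φ₃ φ₄ hφ₁ hφ₂ hφ₃ hφ₄ X₁ hX₁ X₂
    hX₂ X₃ hX₃ X₄ hX₄
end

section
/- Smoking–genotype front-door identification: in the model X = φ₀(U₀), Y = φ₁(X,U₁), Z = φ₂(Y,U₂), W = φ₃(X,Z,U₃) with independent U_i and all variables discrete, the causal quantity p_y(w) := Σ_x P(W=w | X=x, Y=y) P(X=x) satisfies p_y(w) = Σ_z P(Z=z | Y=y) Σ_{y'} P(W=w | Y=y', Z=z) P(Y=y'), an expression involving only the distribution of (W,Y,Z). -/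
open MeasureTheory ProbabilityTheory

private lemma fd_partition {Ω α : Type*} [MeasurableSpace Ω] [MeasurableSpace α]
    [MeasurableSingletonClass α] [Countable α] (μ : Measure Ω) {s : Set Ω}
    (hs : MeasurableSet s) {f : Ω → α} (hf : Measurable f) :
    μ s = ∑' a, μ (s ∩ f ⁻¹' {a}) := by
  have h1 : s = ⋃ a, s ∩ f ⁻¹' {a} := by
    ext ω; simp
  have h2 : Pairwise (Function.onFun Disjoint fun a => s ∩ f ⁻¹' {a}) := by
    intro a b hab
    simp only [Function.onFun, Set.disjoint_left]
    rintro ω ⟨-, h1⟩ ⟨-, h2⟩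
    exact hab ((Set.mem_singleton_iff.1 h1).symm.trans (Set.mem_singleton_iff.1 h2))
  conv_lhs => rw [h1]
  exact measure_iUnion h2 fun a => hs.inter (hf (measurableSet_singleton a))

private lemma fd_cancel1 {a S : ENNReal} (ha0 : a ≠ 0) (ha : a ≠ ⊤) : a⁻¹ * (S * a) = S := by
  rw [mul_comm S a, ← mul_assoc, ENNReal.inv_mul_cancel ha0 ha, one_mul]

private lemma fd_cancel2 {r m S : ENNReal} (hr0 : r ≠ 0) (hr : r ≠ ⊤) (hm0 : m ≠ 0)
    (hm : m ≠ ⊤) : (r * m)⁻¹ * (r * S) * m = S := by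
  rw [ENNReal.mul_inv (Or.inl hr0) (Or.inl hr)]
  have h : r⁻¹ * m⁻¹ * (r * S) * m = (r⁻¹ * r) * ((m⁻¹ * m) * S) := by ring
  rw [h, ENNReal.inv_mul_cancel hr0 hr, ENNReal.inv_mul_cancel hm0 hm, one_mul, one_mul]

/-- Smoking–genotype front-door identification: in the model `X = φ₀(U₀)`,
`Y = φ₁(X,U₁)`, `Z = φ₂(Y,U₂)`, `W = φ₃(X,Z,U₃)` with independent `Uᵢ`, the
adjustment-formula quantity `p_y(w) = Σ_x P(W=w|X=x,Y=y) P(X=x)` equals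
`Σ_z P(Z=z|Y=y) Σ_{y'} P(W=w|Y=y',Z=z) P(Y=y')`. -/
theorem smoking_genotype_front_door
    {Ω 𝒳 𝒴 𝒵 𝒲 : Type*} [MeasurableSpace Ω]
    [MeasurableSpace 𝒳] [MeasurableSingletonClass 𝒳] [Countable 𝒳]
    [MeasurableSpace 𝒴] [MeasurableSingletonClass 𝒴] [Countable 𝒴]
    [MeasurableSpace 𝒵] [MeasurableSingletonClass 𝒵] [Countable 𝒵]
    [MeasurableSpace 𝒲] [MeasurableSingletonClass 𝒲] [Countable 𝒲]
    (μ : Measure Ω) [IsProbabilityMeasure μ]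
    (U : Fin 4 → Ω → ℝ) (hU : ∀ i, Measurable (U i))
    (hindep : iIndepFun U μ)
    (φ₀ : ℝ → 𝒳) (φ₁ : 𝒳 → ℝ → 𝒴) (φ₂ : 𝒴 → ℝ → 𝒵) (φ₃ : 𝒳 → 𝒵 → ℝ → 𝒲)
    (hφ₀ : Measurable φ₀)
    (hφ₁ : Measurable fun p : 𝒳 × ℝ => φ₁ p.1 p.2)
    (hφ₂ : Measurable fun p : 𝒴 × ℝ => φ₂ p.1 p.2)
    (hφ₃ : Measurable fun p : 𝒳 × 𝒵 × ℝ => φ₃ p.1 p.2.1 p.2.2)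
    (X : Ω → 𝒳) (hX : ∀ ω, X ω = φ₀ (U 0 ω))
    (Y : Ω → 𝒴) (hY : ∀ ω, Y ω = φ₁ (X ω) (U 1 ω))
    (Z : Ω → 𝒵) (hZ : ∀ ω, Z ω = φ₂ (Y ω) (U 2 ω))
    (W : Ω → 𝒲) (hW : ∀ ω, W ω = φ₃ (X ω) (Z ω) (U 3 ω))
    (y : 𝒴) (w : 𝒲)
    (hposXY : ∀ (x : 𝒳) (y' : 𝒴), 0 < μ {ω | X ω = x ∧ Y ω = y'})
    (hposYZ : ∀ (y' : 𝒴) (z : 𝒵), 0 < μ {ω | Y ω = y' ∧ Z ω = z})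
    (hposY : ∀ y' : 𝒴, 0 < μ {ω | Y ω = y'}) :
    ∑' x : 𝒳, μ[|{ω | X ω = x ∧ Y ω = y}] {ω | W ω = w} * μ {ω | X ω = x}
      = ∑' z : 𝒵, μ[|{ω | Y ω = y}] {ω | Z ω = z} *
          ∑' y' : 𝒴, μ[|{ω | Y ω = y' ∧ Z ω = z}] {ω | W ω = w} * μ {ω | Y ω = y'} := by
  classical
  -- measurability of the random variables
  have hXm : Measurable X := by
    have h : X = fun ω => φ₀ (U 0 ω) := funext hX
    rw [h]; exact hφ₀.comp (hU 0)
  have hYm : Measurable Y := by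
    have h : Y = fun ω => φ₁ (X ω) (U 1 ω) := funext hY
    rw [h]; exact hφ₁.comp (hXm.prodMk (hU 1))
  have hZm : Measurable Z := by
    have h : Z = fun ω => φ₂ (Y ω) (U 2 ω) := funext hZ
    rw [h]; exact hφ₂.comp (hYm.prodMk (hU 2))
  have hWm : Measurable W := by
    have h : W = fun ω => φ₃ (X ω) (Z ω) (U 3 ω) := funext hW
    rw [h]; exact hφ₃.comp (hXm.prodMk (hZm.prodMk (hU 3)))
  -- abbreviations
  set q : 𝒳 → 𝒵 → ENNReal := fun x z => μ {ω | φ₃ x z (U 3 ω) = w} with hqdef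
  set r : 𝒴 → 𝒵 → ENNReal := fun y' z => μ {ω | φ₂ y' (U 2 ω) = z} with hrdef
  -- independence facts
  have ind2 : IndepFun (fun ω => (U 0 ω, U 1 ω)) (U 2) μ :=
    hindep.indepFun_prodMk hU 0 1 2 (by decide) (by decide)
  have ind3 : IndepFun (fun ω => (U 0 ω, U 1 ω, U 2 ω)) (U 3) μ := by
    have h := hindep.indepFun_finset {0, 1, 2} {3} (by decide) hU
    have h0 : (0 : Fin 4) ∈ ({0, 1, 2} : Finset (Fin 4)) := by decide
    have h1 : (1 : Fin 4) ∈ ({0, 1, 2} : Finset (Fin 4)) := by decide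
    have h2 : (2 : Fin 4) ∈ ({0, 1, 2} : Finset (Fin 4)) := by decide
    have h3 : (3 : Fin 4) ∈ ({3} : Finset (Fin 4)) := by decide
    exact h.comp
      (show Measurable fun v : (i : ({0, 1, 2} : Finset (Fin 4))) → ℝ =>
        (v ⟨0, h0⟩, v ⟨1, h1⟩, v ⟨2, h2⟩) by fun_prop)
      (show Measurable fun v : (i : ({3} : Finset (Fin 4))) → ℝ => v ⟨3, h3⟩ by fun_prop)
  have key2 : ∀ (A : Set (ℝ × ℝ)), MeasurableSet A → ∀ (B : Set ℝ), MeasurableSet B →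
      μ ((fun ω => (U 0 ω, U 1 ω)) ⁻¹' A ∩ U 2 ⁻¹' B)
        = μ ((fun ω => (U 0 ω, U 1 ω)) ⁻¹' A) * μ (U 2 ⁻¹' B) :=
    fun A hA B hB => ind2.measure_inter_preimage_eq_mul A B hA hB
  have key3 : ∀ (A : Set (ℝ × ℝ × ℝ)), MeasurableSet A → ∀ (B : Set ℝ), MeasurableSet B →
      μ ((fun ω => (U 0 ω, U 1 ω, U 2 ω)) ⁻¹' A ∩ U 3 ⁻¹' B)
        = μ ((fun ω => (U 0 ω, U 1 ω, U 2 ω)) ⁻¹' A) * μ (U 3 ⁻¹' B) :=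
    fun A hA B hB => ind3.measure_inter_preimage_eq_mul A B hA hB
  -- measurable sets
  have mA2 : ∀ (x : 𝒳) (y' : 𝒴),
      MeasurableSet {p : ℝ × ℝ | φ₀ p.1 = x ∧ φ₁ (φ₀ p.1) p.2 = y'} := by
    intro x y'
    have m1 : Measurable fun p : ℝ × ℝ => φ₀ p.1 := hφ₀.comp measurable_fst
    have m2 : Measurable fun p : ℝ × ℝ => φ₁ (φ₀ p.1) p.2 :=
      hφ₁.comp (m1.prodMk measurable_snd)
    exact (m1 (measurableSet_singleton x)).inter (m2 (measurableSet_singleton y'))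
  have mAY : ∀ (y' : 𝒴), MeasurableSet {p : ℝ × ℝ | φ₁ (φ₀ p.1) p.2 = y'} := fun y' =>
    (hφ₁.comp ((hφ₀.comp measurable_fst).prodMk measurable_snd)) (measurableSet_singleton y')
  have mA3 : ∀ (x : 𝒳) (y' : 𝒴) (z : 𝒵), MeasurableSet
      {p : ℝ × ℝ × ℝ | φ₀ p.1 = x ∧ φ₁ (φ₀ p.1) p.2.1 = y'
        ∧ φ₂ (φ₁ (φ₀ p.1) p.2.1) p.2.2 = z} := by
    intro x y' z
    have m1 : Measurable fun p : ℝ × ℝ × ℝ => φ₀ p.1 := hφ₀.comp measurable_fst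
    have m2 : Measurable fun p : ℝ × ℝ × ℝ => φ₁ (φ₀ p.1) p.2.1 :=
      hφ₁.comp (m1.prodMk (measurable_fst.comp measurable_snd))
    have m3 : Measurable fun p : ℝ × ℝ × ℝ => φ₂ (φ₁ (φ₀ p.1) p.2.1) p.2.2 :=
      hφ₂.comp (m2.prodMk (measurable_snd.comp measurable_snd))
    exact (m1 (measurableSet_singleton x)).inter
      ((m2 (measurableSet_singleton y')).inter (m3 (measurableSet_singleton z)))
  have mB2 : ∀ (y' : 𝒴) (z : 𝒵), MeasurableSet {c : ℝ | φ₂ y' c = z} := fun y' z =>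
    (hφ₂.comp (measurable_const.prodMk measurable_id)) (measurableSet_singleton z)
  have mB3 : ∀ (x : 𝒳) (z : 𝒵), MeasurableSet {c : ℝ | φ₃ x z c = w} := fun x z =>
    (hφ₃.comp (measurable_const.prodMk (measurable_const.prodMk measurable_id)))
      (measurableSet_singleton w)
  have msXY : ∀ (x : 𝒳) (y' : 𝒴), MeasurableSet {ω | X ω = x ∧ Y ω = y'} := fun x y' =>
    (hXm (measurableSet_singleton x)).inter (hYm (measurableSet_singleton y'))
  have msY : ∀ (y' : 𝒴), MeasurableSet {ω | Y ω = y'} := fun y' =>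
    hYm (measurableSet_singleton y')
  have msYZ : ∀ (y' : 𝒴) (z : 𝒵), MeasurableSet {ω | Y ω = y' ∧ Z ω = z} := fun y' z =>
    (hYm (measurableSet_singleton y')).inter (hZm (measurableSet_singleton z))
  have msW : MeasurableSet {ω | W ω = w} := hWm (measurableSet_singleton w)
  -- factorization lemmas
  have hZcond : ∀ (x : 𝒳) (y' : 𝒴) (z : 𝒵),
      μ {ω | X ω = x ∧ Y ω = y' ∧ Z ω = z} = r y' z * μ {ω | X ω = x ∧ Y ω = y'} := by
    intro x y' z
    have hset : {ω | X ω = x ∧ Y ω = y' ∧ Z ω = z}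
        = (fun ω => (U 0 ω, U 1 ω)) ⁻¹' {p : ℝ × ℝ | φ₀ p.1 = x ∧ φ₁ (φ₀ p.1) p.2 = y'}
          ∩ U 2 ⁻¹' {c | φ₂ y' c = z} := by
      ext ω
      simp only [Set.mem_setOf_eq, Set.mem_inter_iff, Set.mem_preimage, hZ, hY, hX]
      constructor
      · rintro ⟨ha, hb, hc⟩; subst hb; exact ⟨⟨ha, rfl⟩, hc⟩
      · rintro ⟨⟨ha, hb⟩, hc⟩; subst hb; exact ⟨ha, rfl, hc⟩
    have heXY : {ω | X ω = x ∧ Y ω = y'}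
        = (fun ω => (U 0 ω, U 1 ω)) ⁻¹' {p : ℝ × ℝ | φ₀ p.1 = x ∧ φ₁ (φ₀ p.1) p.2 = y'} := by
      ext ω; simp only [Set.mem_setOf_eq, Set.mem_preimage, hY, hX]
    rw [hset, key2 _ (mA2 x y') _ (mB2 y' z), ← heXY, mul_comm]
    rfl
  have hYZfac : ∀ (y' : 𝒴) (z : 𝒵),
      μ {ω | Y ω = y' ∧ Z ω = z} = r y' z * μ {ω | Y ω = y'} := by
    intro y' z
    have hset : {ω | Y ω = y' ∧ Z ω = z}
        = (fun ω => (U 0 ω, U 1 ω)) ⁻¹' {p : ℝ × ℝ | φ₁ (φ₀ p.1) p.2 = y'}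
          ∩ U 2 ⁻¹' {c | φ₂ y' c = z} := by
      ext ω
      simp only [Set.mem_setOf_eq, Set.mem_inter_iff, Set.mem_preimage, hZ, hY, hX]
      constructor
      · rintro ⟨hb, hc⟩; subst hb; exact ⟨rfl, hc⟩
      · rintro ⟨hb, hc⟩; subst hb; exact ⟨rfl, hc⟩
    have heY : {ω | Y ω = y'}
        = (fun ω => (U 0 ω, U 1 ω)) ⁻¹' {p : ℝ × ℝ | φ₁ (φ₀ p.1) p.2 = y'} := by
      ext ω; simp only [Set.mem_setOf_eq, Set.mem_preimage, hY, hX]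
    rw [hset, key2 _ (mAY y') _ (mB2 y' z), ← heY, mul_comm]
    rfl
  have hWfac : ∀ (x : 𝒳) (y' : 𝒴) (z : 𝒵),
      μ ({ω | X ω = x ∧ Y ω = y' ∧ Z ω = z} ∩ {ω | W ω = w})
        = q x z * μ {ω | X ω = x ∧ Y ω = y' ∧ Z ω = z} := by
    intro x y' z
    have heXYZ : {ω | X ω = x ∧ Y ω = y' ∧ Z ω = z}
        = (fun ω => (U 0 ω, U 1 ω, U 2 ω)) ⁻¹' {p : ℝ × ℝ × ℝ | φ₀ p.1 = x
            ∧ φ₁ (φ₀ p.1) p.2.1 = y' ∧ φ₂ (φ₁ (φ₀ p.1) p.2.1) p.2.2 = z} := by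
      ext ω; simp only [Set.mem_setOf_eq, Set.mem_preimage, hZ, hY, hX]
    have hset : {ω | X ω = x ∧ Y ω = y' ∧ Z ω = z} ∩ {ω | W ω = w}
        = (fun ω => (U 0 ω, U 1 ω, U 2 ω)) ⁻¹' {p : ℝ × ℝ × ℝ | φ₀ p.1 = x
            ∧ φ₁ (φ₀ p.1) p.2.1 = y' ∧ φ₂ (φ₁ (φ₀ p.1) p.2.1) p.2.2 = z}
          ∩ U 3 ⁻¹' {c | φ₃ x z c = w} := by
      ext ω
      simp only [Set.mem_setOf_eq, Set.mem_inter_iff, Set.mem_preimage, hW, hZ, hY, hX]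
      constructor
      · rintro ⟨⟨ha, hb, hc⟩, hd⟩
        subst ha; subst hb; subst hc; exact ⟨⟨rfl, rfl, rfl⟩, hd⟩
      · rintro ⟨⟨ha, hb, hc⟩, hd⟩
        subst ha; subst hb; subst hc; exact ⟨⟨rfl, rfl, rfl⟩, hd⟩
    rw [hset, key3 _ (mA3 x y' z) _ (mB3 x z), ← heXYZ, mul_comm]
    rfl
  -- positivity and finiteness
  have hrne : ∀ (y' : 𝒴) (z : 𝒵), r y' z ≠ 0 := by
    intro y' z h
    have hp := hposYZ y' z
    rw [hYZfac y' z, h, zero_mul] at hp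
    exact lt_irrefl _ hp
  have hrtop : ∀ (y' : 𝒴) (z : 𝒵), r y' z ≠ ⊤ := by
    intro y' z; rw [hrdef]; exact measure_ne_top μ _
  -- the conditional probabilities
  have hLHSterm : ∀ x : 𝒳, μ[|{ω | X ω = x ∧ Y ω = y}] {ω | W ω = w}
      = ∑' z : 𝒵, q x z * r y z := by
    intro x
    rw [cond_apply (msXY x y) μ]
    have hpart : μ ({ω | X ω = x ∧ Y ω = y} ∩ {ω | W ω = w})
        = ∑' z : 𝒵, μ ({ω | X ω = x ∧ Y ω = y} ∩ {ω | W ω = w} ∩ Z ⁻¹' {z}) :=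
      fd_partition μ ((msXY x y).inter msW) hZm
    have hterm : ∀ z : 𝒵, μ ({ω | X ω = x ∧ Y ω = y} ∩ {ω | W ω = w} ∩ Z ⁻¹' {z})
        = (q x z * r y z) * μ {ω | X ω = x ∧ Y ω = y} := by
      intro z
      have hsets : {ω | X ω = x ∧ Y ω = y} ∩ {ω | W ω = w} ∩ Z ⁻¹' {z}
          = {ω | X ω = x ∧ Y ω = y ∧ Z ω = z} ∩ {ω | W ω = w} := by
        ext ω
        simp only [Set.mem_inter_iff, Set.mem_setOf_eq, Set.mem_preimage,
          Set.mem_singleton_iff]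
        tauto
      rw [hsets, hWfac x y z, hZcond x y z]
      ring
    rw [hpart, tsum_congr hterm, ENNReal.tsum_mul_right]
    exact fd_cancel1 (hposXY x y).ne' (measure_ne_top μ _)
  have hRZ : ∀ z : 𝒵, μ[|{ω | Y ω = y}] {ω | Z ω = z} = r y z := by
    intro z
    rw [cond_apply (msY y) μ]
    have hsets : {ω | Y ω = y} ∩ {ω | Z ω = z} = {ω | Y ω = y ∧ Z ω = z} := rfl
    rw [hsets, hYZfac y z, mul_comm (r y z), ← mul_assoc,
      ENNReal.inv_mul_cancel (hposY y).ne' (measure_ne_top μ _), one_mul]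
  have hInner : ∀ (y' : 𝒴) (z : 𝒵),
      μ[|{ω | Y ω = y' ∧ Z ω = z}] {ω | W ω = w} * μ {ω | Y ω = y'}
        = ∑' x : 𝒳, q x z * μ {ω | X ω = x ∧ Y ω = y'} := by
    intro y' z
    rw [cond_apply (msYZ y' z) μ]
    have hpart : μ ({ω | Y ω = y' ∧ Z ω = z} ∩ {ω | W ω = w})
        = ∑' x : 𝒳, μ ({ω | Y ω = y' ∧ Z ω = z} ∩ {ω | W ω = w} ∩ X ⁻¹' {x}) :=
      fd_partition μ ((msYZ y' z).inter msW) hXm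
    have hterm : ∀ x : 𝒳, μ ({ω | Y ω = y' ∧ Z ω = z} ∩ {ω | W ω = w} ∩ X ⁻¹' {x})
        = r y' z * (q x z * μ {ω | X ω = x ∧ Y ω = y'}) := by
      intro x
      have hsets : {ω | Y ω = y' ∧ Z ω = z} ∩ {ω | W ω = w} ∩ X ⁻¹' {x}
          = {ω | X ω = x ∧ Y ω = y' ∧ Z ω = z} ∩ {ω | W ω = w} := by
        ext ω
        simp only [Set.mem_inter_iff, Set.mem_setOf_eq, Set.mem_preimage,
          Set.mem_singleton_iff]
        tauto
      rw [hsets, hWfac x y' z, hZcond x y' z]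
      ring
    rw [hpart, tsum_congr hterm, ENNReal.tsum_mul_left, hYZfac y' z]
    exact fd_cancel2 (hrne y' z) (hrtop y' z) (hposY y').ne' (measure_ne_top μ _)
  have hXpart : ∀ x : 𝒳, μ {ω | X ω = x} = ∑' y' : 𝒴, μ {ω | X ω = x ∧ Y ω = y'} := by
    intro x
    have h := fd_partition μ (hXm (measurableSet_singleton x)) hYm (s := {ω | X ω = x})
    rw [h]
    exact tsum_congr fun y' => rfl
  have hS : ∀ z : 𝒵,
      (∑' y' : 𝒴, μ[|{ω | Y ω = y' ∧ Z ω = z}] {ω | W ω = w} * μ {ω | Y ω = y'})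
        = ∑' x : 𝒳, q x z * μ {ω | X ω = x} := by
    intro z
    rw [tsum_congr (fun y' => hInner y' z), ENNReal.tsum_comm]
    refine tsum_congr fun x => ?_
    rw [ENNReal.tsum_mul_left, hXpart x]
  calc ∑' x : 𝒳, μ[|{ω | X ω = x ∧ Y ω = y}] {ω | W ω = w} * μ {ω | X ω = x}
      = ∑' x : 𝒳, (∑' z : 𝒵, q x z * r y z) * μ {ω | X ω = x} :=
        tsum_congr fun x => by rw [hLHSterm x]
    _ = ∑' x : 𝒳, ∑' z : 𝒵, q x z * r y z * μ {ω | X ω = x} :=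
        tsum_congr fun x => (ENNReal.tsum_mul_right).symm
    _ = ∑' z : 𝒵, ∑' x : 𝒳, q x z * r y z * μ {ω | X ω = x} := ENNReal.tsum_comm
    _ = ∑' z : 𝒵, r y z * ∑' x : 𝒳, q x z * μ {ω | X ω = x} := by
        refine tsum_congr fun z => ?_
        rw [← ENNReal.tsum_mul_left]
        exact tsum_congr fun x => by ring
    _ = ∑' z : 𝒵, μ[|{ω | Y ω = y}] {ω | Z ω = z} *
          ∑' y' : 𝒴, μ[|{ω | Y ω = y' ∧ Z ω = z}] {ω | W ω = w} * μ {ω | Y ω = y'} := by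
        refine tsum_congr fun z => ?_
        simp only [hRZ z, hS z]
end

section
/- Smoking–genotype model, key conditional factorization: P(W=w | Y=y, Z=z) = Σ_x P(W=w | X=x, Z=z) P(X=x | Y=y), in the model X = φ₀(U₀), Y = φ₁(X,U₁), Z = φ₂(Y,U₂), W = φ₃(X,Z,U₃) with the U_i independent. -/
/-!
Let `ℱₖ` be the σ-algebra generated by the noises `Uⱼ`, `j < k`. Then `X, Y` are `ℱ₂`-measurable,
`Z` is `ℱ₃`-measurable, and `Uₖ` is independent of `ℱₖ`. On any `ℱ₂`-event inside `{Y = y}` the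
event `{Z = z}` coincides with `{φ₂(y, U₂) = z}`, so it splits off the constant factor
`p = P(φ₂(y, U₂) = z)`; likewise on any `ℱ₃`-event inside `{X = x, Z = z}` the event `{W = w}`
splits off `q x = P(φ₃(x, z, U₃) = w)`. Decomposing `P(Y = y, Z = z, W = w)` along the values of
`X`, the factor `p` cancels against `P(Y = y, Z = z) = P(Y = y) p` and what remains is
`∑ₓ q x · P(X = x | Y = y)`, while `q x = P(W = w | X = x, Z = z)`.
-/

open MeasureTheory ProbabilityTheory Set
open scoped ENNReal

section StrictPast

variable {Ω ι β : Type*} [Preorder ι] [mβ : MeasurableSpace β]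

abbrev strictPast (U : ι → Ω → β) (k : ι) : MeasurableSpace Ω :=
  ⨆ j ∈ Iio k, mβ.comap (U j)

lemma measurable_strictPast (U : ι → Ω → β) {j k : ι} (hjk : j < k) :
    Measurable[strictPast U k] (U j) :=
  (comap_measurable (U j)).mono (le_iSup₂ (f := fun j (_ : j ∈ Iio k) => mβ.comap (U j)) j hjk)
    le_rfl

lemma strictPast_mono (U : ι → Ω → β) : Monotone (strictPast U) :=
  fun _ _ hkl => biSup_mono fun _ hj => lt_of_lt_of_le hj hkl

lemma strictPast_le [mΩ : MeasurableSpace Ω] {U : ι → Ω → β} (hU : ∀ i, Measurable (U i))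
    (k : ι) : strictPast U k ≤ mΩ :=
  iSup₂_le fun i _ => (hU i).comap_le

lemma ProbabilityTheory.iIndepFun.indep_strictPast [MeasurableSpace Ω] {μ : Measure Ω}
    {U : ι → Ω → β} (h : iIndepFun U μ) (hU : ∀ i, Measurable (U i)) (k : ι) :
    Indep (strictPast U k) (mβ.comap (U k)) μ :=
  indep_of_indep_of_le_right
    (indep_iSup_of_disjoint (fun i => (hU i).comap_le) ((iIndepFun_iff_iIndep _ _ _).1 h)
      (disjoint_singleton_right.2 (lt_irrefl k)))
    (le_iSup₂ (f := fun j (_ : j ∈ ({k} : Set ι)) => mβ.comap (U j)) k rfl)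

end StrictPast

section Factorization

variable {Ω α γ : Type*} {mΩ : MeasurableSpace Ω} {μ : Measure Ω}

lemma ProbabilityTheory.Indep.measure_inter_preimage_eq_mul_of_eqOn [MeasurableSpace γ]
    {m₁ m₂ : MeasurableSpace Ω} (hind : Indep m₁ m₂ μ) {B' : Ω → γ} (hB' : Measurable[m₂] B')
    {t : Set γ} (ht : MeasurableSet t) {E : Set Ω} (hE : MeasurableSet[m₁] E) {B : Ω → γ}
    (hB : EqOn B B' E) :
    μ (E ∩ B ⁻¹' t) = μ E * μ (B' ⁻¹' t) := by
  rw [hB.inter_preimage_eq]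
  exact (Indep_iff _ _ _).1 hind _ _ hE (hB' ht)

lemma measure_eq_tsum_preimage_singleton_inter [MeasurableSpace α] [MeasurableSingletonClass α]
    [Countable α] {X : Ω → α} (hX : Measurable X) (s : Set Ω) :
    μ s = ∑' x, μ (X ⁻¹' {x} ∩ s) := by
  calc μ s = μ.restrict s (⋃ x, X ⁻¹' {x}) := by
        rw [← preimage_iUnion, iUnion_of_singleton, preimage_univ, Measure.restrict_apply_univ]
    _ = ∑' x, μ.restrict s (X ⁻¹' {x}) :=
        measure_iUnion (pairwise_disjoint_fiber X) fun x => hX (measurableSet_singleton x)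
    _ = ∑' x, μ (X ⁻¹' {x} ∩ s) := by
        simp only [Measure.restrict_apply (hX (measurableSet_singleton _))]

lemma cond_apply_eq_of_measure_inter_eq_mul [IsFiniteMeasure μ] {s t : Set Ω}
    (hs : MeasurableSet s) (hμs : μ s ≠ 0) {c : ℝ≥0∞} (h : μ (s ∩ t) = μ s * c) :
    μ[t | s] = c := by
  rw [cond_apply hs, h, ← mul_assoc, ENNReal.inv_mul_cancel hμs (measure_ne_top μ s), one_mul]

/-- `hAB`, `hAXB` say that `B` is independent of `X` given `A`, with `P(B | A) = p`;
`hAXBC`, `hXBC` say that `C` is independent of `A` given `X = x` and `B`, with probability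
`q x`. -/
lemma cond_inter_eq_tsum_cond_mul_cond [MeasurableSpace α] [MeasurableSingletonClass α]
    [Countable α] [IsFiniteMeasure μ] {X : Ω → α} (hX : Measurable X) {A B C : Set Ω}
    (hA : MeasurableSet A) (hB : MeasurableSet B) {p : ℝ≥0∞} {q : α → ℝ≥0∞}
    (hAB : μ (A ∩ B) = μ A * p)
    (hAXB : ∀ x, μ (A ∩ X ⁻¹' {x} ∩ B) = μ (A ∩ X ⁻¹' {x}) * p)
    (hAXBC : ∀ x, μ (A ∩ X ⁻¹' {x} ∩ B ∩ C) = μ (A ∩ X ⁻¹' {x} ∩ B) * q x)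
    (hXBC : ∀ x, μ (X ⁻¹' {x} ∩ B ∩ C) = μ (X ⁻¹' {x} ∩ B) * q x)
    (hμAB : μ (A ∩ B) ≠ 0) (hμXB : ∀ x, μ (X ⁻¹' {x} ∩ B) ≠ 0) :
    μ[C | A ∩ B] = ∑' x, μ[C | X ⁻¹' {x} ∩ B] * μ[X ⁻¹' {x} | A] := by
  have hp : p ≠ 0 := right_ne_zero_of_mul (hAB ▸ hμAB)
  have hp' : p ≠ ∞ := fun h => measure_ne_top μ (A ∩ B) <| by
    rw [hAB, h, ENNReal.mul_top (left_ne_zero_of_mul (hAB ▸ hμAB))]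
  rw [measure_eq_tsum_preimage_singleton_inter hX C]
  refine tsum_congr fun x => ?_
  rw [cond_apply_eq_of_measure_inter_eq_mul ((hX (measurableSet_singleton x)).inter hB) (hμXB x)
    (hXBC x), cond_apply (hA.inter hB), cond_apply hA, inter_inter_inter_comm, ← inter_assoc,
    hAXBC, hAXB, hAB, ENNReal.mul_inv (.inr hp') (.inr hp)]
  calc (μ A)⁻¹ * p⁻¹ * (μ (A ∩ X ⁻¹' {x}) * p * q x)
      = q x * ((μ A)⁻¹ * μ (A ∩ X ⁻¹' {x})) * (p⁻¹ * p) := by ring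
    _ = q x * ((μ A)⁻¹ * μ (A ∩ X ⁻¹' {x})) := by rw [ENNReal.inv_mul_cancel hp hp', mul_one]

end Factorization

theorem smoking_genotype_factorization_general
    {Ω 𝒳 𝒴 𝒵 𝒲 : Type*} [MeasurableSpace Ω]
    [MeasurableSpace 𝒳] [MeasurableSingletonClass 𝒳] [Countable 𝒳]
    [MeasurableSpace 𝒴] [MeasurableSingletonClass 𝒴]
    [MeasurableSpace 𝒵] [MeasurableSingletonClass 𝒵]
    [MeasurableSpace 𝒲] [MeasurableSingletonClass 𝒲]
    (μ : Measure Ω) [IsProbabilityMeasure μ]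
    (U : Fin 4 → Ω → ℝ) (hU : ∀ i, Measurable (U i))
    (hindep : iIndepFun (m := fun _ => (inferInstance : MeasurableSpace ℝ)) U μ)
    (φ₀ : ℝ → 𝒳) (φ₁ : 𝒳 → ℝ → 𝒴) (φ₂ : 𝒴 → ℝ → 𝒵) (φ₃ : 𝒳 → 𝒵 → ℝ → 𝒲)
    (hφ₀ : Measurable φ₀)
    (hφ₁ : Measurable fun p : 𝒳 × ℝ => φ₁ p.1 p.2)
    (hφ₂ : Measurable fun p : 𝒴 × ℝ => φ₂ p.1 p.2)
    (hφ₃ : Measurable fun p : 𝒳 × 𝒵 × ℝ => φ₃ p.1 p.2.1 p.2.2)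
    (X : Ω → 𝒳) (hX : ∀ ω, X ω = φ₀ (U 0 ω))
    (Y : Ω → 𝒴) (hY : ∀ ω, Y ω = φ₁ (X ω) (U 1 ω))
    (Z : Ω → 𝒵) (hZ : ∀ ω, Z ω = φ₂ (Y ω) (U 2 ω))
    (W : Ω → 𝒲) (hW : ∀ ω, W ω = φ₃ (X ω) (Z ω) (U 3 ω))
    (y : 𝒴) (z : 𝒵) (w : 𝒲)
    (hposYZ : 0 < μ {ω | Y ω = y ∧ Z ω = z})
    (hposXZ : ∀ x : 𝒳, 0 < μ {ω | X ω = x ∧ Z ω = z}) :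
    μ[|{ω | Y ω = y ∧ Z ω = z}] {ω | W ω = w}
      = ∑' x : 𝒳, μ[|{ω | X ω = x ∧ Z ω = z}] {ω | W ω = w} *
          μ[|{ω | Y ω = y}] {ω | X ω = x} := by
  have hX₂ : Measurable[strictPast U 2] X := by
    rw [funext hX]; exact hφ₀.comp (measurable_strictPast U (by decide))
  have hY₂ : Measurable[strictPast U 2] Y := by
    rw [funext hY]; exact hφ₁.comp (hX₂.prodMk (measurable_strictPast U (by decide)))
  have hℱ : strictPast U 2 ≤ strictPast U 3 := strictPast_mono U (by decide)
  have hZ₃ : Measurable[strictPast U 3] Z := by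
    rw [funext hZ]
    exact hφ₂.comp ((hY₂.mono hℱ le_rfl).prodMk (measurable_strictPast U (by decide)))
  have hEx : ∀ x, MeasurableSet[strictPast U 2] (X ⁻¹' {x}) :=
    fun x => hX₂ (measurableSet_singleton x)
  have hEy : MeasurableSet[strictPast U 2] (Y ⁻¹' {y}) := hY₂ (measurableSet_singleton y)
  have hEz : MeasurableSet[strictPast U 3] (Z ⁻¹' {z}) := hZ₃ (measurableSet_singleton z)
  have hZ_noise : ∀ E, MeasurableSet[strictPast U 2] E → E ⊆ Y ⁻¹' {y} →
      μ (E ∩ Z ⁻¹' {z}) = μ E * μ {ω | φ₂ y (U 2 ω) = z} := fun E hE hEY =>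
    (hindep.indep_strictPast hU 2).measure_inter_preimage_eq_mul_of_eqOn
      (B' := fun ω => φ₂ y (U 2 ω))
      ((hφ₂.comp measurable_prodMk_left).comp (comap_measurable (U 2)))
      (measurableSet_singleton z) hE fun ω hω => by rw [hZ ω, (hEY hω : Y ω = y)]
  have hW_noise : ∀ x E, MeasurableSet[strictPast U 3] E → E ⊆ X ⁻¹' {x} ∩ Z ⁻¹' {z} →
      μ (E ∩ W ⁻¹' {w}) = μ E * μ {ω | φ₃ x z (U 3 ω) = w} := fun x E hE hEXZ =>
    (hindep.indep_strictPast hU 3).measure_inter_preimage_eq_mul_of_eqOn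
      (B' := fun ω => φ₃ x z (U 3 ω))
      ((hφ₃.comp (measurable_prodMk_left.comp measurable_prodMk_left)).comp
        (comap_measurable (U 3)))
      (measurableSet_singleton w) hE fun ω hω => by
        rw [hW ω, ((hEXZ hω).1 : X ω = x), ((hEXZ hω).2 : Z ω = z)]
  exact cond_inter_eq_tsum_cond_mul_cond (C := W ⁻¹' {w})
    (hX₂.mono (strictPast_le hU 2) le_rfl) (strictPast_le hU 2 _ hEy) (strictPast_le hU 3 _ hEz)
    (hZ_noise _ hEy Subset.rfl) (fun x => hZ_noise _ (hEy.inter (hEx x)) inter_subset_left)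
    (fun x => hW_noise x _ ((hℱ _ (hEy.inter (hEx x))).inter hEz) fun _ h => ⟨h.1.2, h.2⟩)
    (fun x => hW_noise x _ ((hℱ _ (hEx x)).inter hEz) Subset.rfl)
    hposYZ.ne' fun x => (hposXZ x).ne'

/-- Smoking–genotype model, key conditional factorization:
`P(W=w | Y=y, Z=z) = Σ_x P(W=w | X=x, Z=z) P(X=x | Y=y)` in the model
`X = φ₀(U₀)`, `Y = φ₁(X,U₁)`, `Z = φ₂(Y,U₂)`, `W = φ₃(X,Z,U₃)` with the `Uᵢ`
independent. -/
theorem smoking_genotype_factorization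
    {Ω 𝒳 𝒴 𝒵 𝒲 : Type*} [MeasurableSpace Ω]
    [MeasurableSpace 𝒳] [MeasurableSingletonClass 𝒳] [Countable 𝒳]
    [MeasurableSpace 𝒴] [MeasurableSingletonClass 𝒴] [Countable 𝒴]
    [MeasurableSpace 𝒵] [MeasurableSingletonClass 𝒵] [Countable 𝒵]
    [MeasurableSpace 𝒲] [MeasurableSingletonClass 𝒲] [Countable 𝒲]
    (μ : Measure Ω) [IsProbabilityMeasure μ]
    (U : Fin 4 → Ω → ℝ) (hU : ∀ i, Measurable (U i))
    (hindep : iIndepFun (m := fun _ => (inferInstance : MeasurableSpace ℝ)) U μ)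
    (φ₀ : ℝ → 𝒳) (φ₁ : 𝒳 → ℝ → 𝒴) (φ₂ : 𝒴 → ℝ → 𝒵) (φ₃ : 𝒳 → 𝒵 → ℝ → 𝒲)
    (hφ₀ : Measurable φ₀)
    (hφ₁ : Measurable fun p : 𝒳 × ℝ => φ₁ p.1 p.2)
    (hφ₂ : Measurable fun p : 𝒴 × ℝ => φ₂ p.1 p.2)
    (hφ₃ : Measurable fun p : 𝒳 × 𝒵 × ℝ => φ₃ p.1 p.2.1 p.2.2)
    (X : Ω → 𝒳) (hX : ∀ ω, X ω = φ₀ (U 0 ω))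
    (Y : Ω → 𝒴) (hY : ∀ ω, Y ω = φ₁ (X ω) (U 1 ω))
    (Z : Ω → 𝒵) (hZ : ∀ ω, Z ω = φ₂ (Y ω) (U 2 ω))
    (W : Ω → 𝒲) (hW : ∀ ω, W ω = φ₃ (X ω) (Z ω) (U 3 ω))
    (y : 𝒴) (z : 𝒵) (w : 𝒲)
    (hposYZ : 0 < μ {ω | Y ω = y ∧ Z ω = z})
    (hposY : 0 < μ {ω | Y ω = y})
    (hposXZ : ∀ x : 𝒳, 0 < μ {ω | X ω = x ∧ Z ω = z}) :
    μ[|{ω | Y ω = y ∧ Z ω = z}] {ω | W ω = w}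
      = ∑' x : 𝒳, μ[|{ω | X ω = x ∧ Z ω = z}] {ω | W ω = w} *
          μ[|{ω | Y ω = y}] {ω | X ω = x} :=
  smoking_genotype_factorization_general μ U hU hindep φ₀ φ₁ φ₂ φ₃ hφ₀ hφ₁ hφ₂ hφ₃ X hX Y hY Z hZ W
    hW y z w hposYZ hposXZ
end

section
/- Robins' g-formula for two-stage treatments: in the model T = τ(U,X), R = ρ(V,X,T), X' = ξ(W,X,T,R), T' = τ'(U',X',T,R), R' = ρ'(V',X',T',T) with U,U',V,V',W independent standard uniforms conditionally independent given X and all variables discrete, the intervention distribution satisfies P(ρ'(V',ξ(W,X,t,ρ(V,X,t)),t',t) ≤ r') = Σ_{r,x,x'} P(R'≤r' | X=x,T=t,R=r,X'=x',T'=t')·P(X'=x' | X=x,T=t,R=r)·P(R=r | X=x,T=t)·P(X=x). -/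
/-!
Given `X = x`, each conditioning event of the g-formula is `{X = x}` intersected with conditions
on some of the coordinates `U, U', V, W` (sections of `τ, τ', ρ, ξ` at the fixed values), and on
it the conditioned variable `R`, `X'` or `R'` becomes a condition on one further coordinate `V`,
`W` or `V'`. Conditional independence of the five coordinates given `X = x` therefore turns each
conditional probability into the probability of that single-coordinate condition given `X = x`,
and their product times `P(X = x)` is the probability that `X = x`, `ρ(V,x,t) = r`,
`ξ(W,x,t,r) = x'` and `ρ'(V',x',t',t) ≤ r'`. These events partition the intervention event.
-/

open MeasureTheory ProbabilityTheory Set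

section

variable {Ω β : Type*} [MeasurableSpace Ω] {μ : Measure Ω}

lemma measure_eq_tsum_inter_preimage_singleton [Countable β] {A : Set Ω} (k : Ω → β)
    (hk : ∀ b, MeasurableSet (A ∩ k ⁻¹' {b})) : μ A = ∑' b, μ (A ∩ k ⁻¹' {b}) := by
  rw [← measure_iUnion (fun b b' hbb' => ((pairwise_disjoint_fiber k) hbb').mono
    inter_subset_right inter_subset_right) hk, ← inter_iUnion, ← preimage_iUnion,
    iUnion_of_singleton, preimage_univ, inter_univ]

lemma cond_congr_of_forall_mem_iff {s a b : Set Ω} (hs : MeasurableSet s)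
    (h : ∀ ω ∈ s, ω ∈ a ↔ ω ∈ b) : μ[a | s] = μ[b | s] := by
  rw [← cond_inter_self hs, ← cond_inter_self hs b]
  congr 1
  ext ω
  exact and_congr_right (h ω)

end

namespace ProbabilityTheory

variable {Ω ι β : Type*} [MeasurableSpace Ω] [MeasurableSpace β] {μ : Measure Ω}
  [Fintype ι] {f : ι → Ω → β} {s : ι → Set β}

lemma iIndepFun.measure_iInter_preimage_eq_prod (hf : iIndepFun f μ)
    (hs : ∀ i, MeasurableSet (s i)) : μ (⋂ i, f i ⁻¹' s i) = ∏ i, μ (f i ⁻¹' s i) := by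
  simpa using hf.measure_inter_preimage_eq_mul Finset.univ (fun i _ => hs i)

lemma iIndepFun.measure_iInter_preimage_inter [DecidableEq ι] [IsProbabilityMeasure μ]
    (hf : iIndepFun f μ) (hs : ∀ i, MeasurableSet (s i)) {j : ι} (hj : s j = univ)
    {B : Set β} (hB : MeasurableSet B) :
    μ ((⋂ i, f i ⁻¹' s i) ∩ f j ⁻¹' B) = μ (⋂ i, f i ⁻¹' s i) * μ (f j ⁻¹' B) := by
  have hupd : (⋂ i, f i ⁻¹' s i) ∩ f j ⁻¹' B = ⋂ i, f i ⁻¹' Function.update s j B i := by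
    ext ω
    simp only [mem_inter_iff, mem_iInter, mem_preimage]
    rw [Function.forall_update_iff (p := fun i (t : Set β) => f i ω ∈ t)]
    grind
  have hs' : ∀ i, MeasurableSet (Function.update s j B i) := by
    intro i; rcases eq_or_ne i j with rfl | h <;> simp [*]
  rw [hupd, hf.measure_iInter_preimage_eq_prod hs', hf.measure_iInter_preimage_eq_prod hs,
    ← Finset.mul_prod_erase _ _ (Finset.mem_univ j),
    ← Finset.mul_prod_erase _ _ (Finset.mem_univ j), hj, Function.update_self, preimage_univ,
    measure_univ, one_mul, mul_comm]
  exact congrArg (· * _) <| Finset.prod_congr rfl fun i hi => by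
    rw [Function.update_of_ne (Finset.ne_of_mem_erase hi)]

variable [IsFiniteMeasure μ] {S : Set Ω}

lemma iIndepFun.measure_inter_iInter_preimage (hS : MeasurableSet S) (hf : iIndepFun f μ[|S])
    (hs : ∀ i, MeasurableSet (s i)) :
    μ (S ∩ ⋂ i, f i ⁻¹' s i) = μ S * ∏ i, μ[f i ⁻¹' s i | S] := by
  rw [← cond_mul_eq_inter hS, hf.measure_iInter_preimage_eq_prod hs, mul_comm]

lemma iIndepFun.cond_inter_iInter_preimage [DecidableEq ι] (hS : MeasurableSet S)
    (hfm : ∀ i, Measurable (f i)) (hf : iIndepFun f μ[|S]) (hs : ∀ i, MeasurableSet (s i))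
    {j : ι} (hj : s j = univ) {B : Set β} (hB : MeasurableSet B)
    (h0 : μ (S ∩ ⋂ i, f i ⁻¹' s i) ≠ 0) :
    μ[f j ⁻¹' B | S ∩ ⋂ i, f i ⁻¹' s i] = μ[f j ⁻¹' B | S] := by
  have hG : MeasurableSet (⋂ i, f i ⁻¹' s i) := .iInter fun i => hfm i (hs i)
  have : IsProbabilityMeasure μ[|S] := cond_isProbabilityMeasure fun hS0 =>
    h0 (measure_mono_null inter_subset_left hS0)
  rw [← cond_cond_eq_cond_inter hS hG, cond_apply hG, hf.measure_iInter_preimage_inter hs hj hB,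
    ← mul_assoc, ENNReal.inv_mul_cancel (cond_pos_of_inter_ne_zero hS h0).ne' (measure_ne_top _ _),
    one_mul]

end ProbabilityTheory

section GFormula

variable {Ω 𝒳 𝒯 ℛ 𝒳' 𝒯' : Type*} {X : Ω → 𝒳} {U U' V V' W : Ω → ℝ}
  {τ : ℝ → 𝒳 → 𝒯} {ρ : ℝ → 𝒳 → 𝒯 → ℛ} {ξ : ℝ → 𝒳 → 𝒯 → ℛ → 𝒳'}
  {τ' : ℝ → 𝒳' → 𝒯 → ℛ → 𝒯'} {ρ' : ℝ → 𝒳' → 𝒯' → 𝒯 → ℝ}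
  {T : Ω → 𝒯} {R : Ω → ℛ} {X' : Ω → 𝒳'} {T' : Ω → 𝒯'} {R' : Ω → ℝ}
  {t : 𝒯} {t' : 𝒯'} {r' : ℝ} {x : 𝒳} {r : ℛ} {x' : 𝒳'}

lemma intervention_inter_fiber_eq :
    {ω | ρ' (V' ω) (ξ (W ω) (X ω) t (ρ (V ω) (X ω) t)) t' t ≤ r'} ∩
        (fun ω => (ρ (V ω) (X ω) t, X ω, ξ (W ω) (X ω) t (ρ (V ω) (X ω) t))) ⁻¹' {(r, x, x')}
      = {ω | X ω = x} ∩ ⋂ i, ![U, U', V, V', W] i ⁻¹' ![univ, univ, {v | ρ v x t = r},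
        {v | ρ' v x' t' t ≤ r'}, {w | ξ w x t r = x'}] i := by
  ext ω
  simp only [mem_inter_iff, mem_iInter, Fin.forall_fin_succ, IsEmpty.forall_iff, mem_preimage,
    mem_ofPred_eq, Matrix.cons_val_zero, Matrix.cons_val_succ, mem_univ, mem_singleton_iff,
    Prod.mk.injEq]
  grind

variable [MeasurableSpace Ω] {μ : Measure Ω} [IsFiniteMeasure μ]

lemma cond_R_eq_cond_V (hX : MeasurableSet {ω | X ω = x})
    (hZ : ∀ i, Measurable (![U, U', V, V', W] i))
    (hind : iIndepFun ![U, U', V, V', W] μ[|{ω | X ω = x}])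
    (hA : MeasurableSet {u | τ u x = t}) (hB : MeasurableSet {v | ρ v x t = r})
    (hT : ∀ ω, T ω = τ (U ω) (X ω)) (hR : ∀ ω, R ω = ρ (V ω) (X ω) (T ω))
    (h0 : μ {ω | X ω = x ∧ T ω = t} ≠ 0) :
    μ[{ω | R ω = r} | {ω | X ω = x ∧ T ω = t}] = μ[V ⁻¹' {v | ρ v x t = r} | {ω | X ω = x}] := by
  have hcond : {ω | X ω = x ∧ T ω = t} = {ω | X ω = x} ∩
      ⋂ i, ![U, U', V, V', W] i ⁻¹' ![{u | τ u x = t}, univ, univ, univ, univ] i := by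
    ext ω
    simp only [mem_inter_iff, mem_iInter, Fin.forall_fin_succ, IsEmpty.forall_iff, mem_preimage,
      mem_ofPred_eq, Matrix.cons_val_zero, Matrix.cons_val_succ, mem_univ]
    grind
  have hs : ∀ i, MeasurableSet (![{u | τ u x = t}, univ, univ, univ, univ] i) := by
    intro i; fin_cases i <;> simp [hA]
  rw [cond_congr_of_forall_mem_iff (hcond ▸ hX.inter (.iInter fun i => hZ i (hs i)))
    (b := V ⁻¹' {v | ρ v x t = r}) ?_, hcond]
  · exact hind.cond_inter_iInter_preimage (j := 2) hX hZ hs rfl hB (hcond ▸ h0)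
  · rintro ω ⟨rfl, hTω⟩
    simp [hR, hTω]

lemma cond_X'_eq_cond_W (hX : MeasurableSet {ω | X ω = x})
    (hZ : ∀ i, Measurable (![U, U', V, V', W] i))
    (hind : iIndepFun ![U, U', V, V', W] μ[|{ω | X ω = x}])
    (hA : MeasurableSet {u | τ u x = t}) (hB : MeasurableSet {v | ρ v x t = r})
    (hC : MeasurableSet {w | ξ w x t r = x'})
    (hT : ∀ ω, T ω = τ (U ω) (X ω)) (hR : ∀ ω, R ω = ρ (V ω) (X ω) (T ω))
    (hX' : ∀ ω, X' ω = ξ (W ω) (X ω) (T ω) (R ω))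
    (h0 : μ {ω | X ω = x ∧ T ω = t ∧ R ω = r} ≠ 0) :
    μ[{ω | X' ω = x'} | {ω | X ω = x ∧ T ω = t ∧ R ω = r}]
      = μ[W ⁻¹' {w | ξ w x t r = x'} | {ω | X ω = x}] := by
  have hcond : {ω | X ω = x ∧ T ω = t ∧ R ω = r} = {ω | X ω = x} ∩
      ⋂ i, ![U, U', V, V', W] i ⁻¹' ![{u | τ u x = t}, univ, {v | ρ v x t = r}, univ, univ] i := by
    ext ω
    simp only [mem_inter_iff, mem_iInter, Fin.forall_fin_succ, IsEmpty.forall_iff, mem_preimage,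
      mem_ofPred_eq, Matrix.cons_val_zero, Matrix.cons_val_succ, mem_univ]
    grind
  have hs : ∀ i, MeasurableSet (![{u | τ u x = t}, univ, {v | ρ v x t = r}, univ, univ] i) := by
    intro i; fin_cases i <;> simp [hA, hB]
  rw [cond_congr_of_forall_mem_iff (hcond ▸ hX.inter (.iInter fun i => hZ i (hs i)))
    (b := W ⁻¹' {w | ξ w x t r = x'}) ?_, hcond]
  · exact hind.cond_inter_iInter_preimage (j := 4) hX hZ hs rfl hC (hcond ▸ h0)
  · rintro ω ⟨rfl, hTω, hRω⟩
    simp [hX', hTω, hRω]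

lemma cond_R'_eq_cond_V' (hX : MeasurableSet {ω | X ω = x})
    (hZ : ∀ i, Measurable (![U, U', V, V', W] i))
    (hind : iIndepFun ![U, U', V, V', W] μ[|{ω | X ω = x}])
    (hA : MeasurableSet {u | τ u x = t}) (hB : MeasurableSet {v | ρ v x t = r})
    (hC : MeasurableSet {w | ξ w x t r = x'}) (hD : MeasurableSet {u | τ' u x' t r = t'})
    (hE : MeasurableSet {v | ρ' v x' t' t ≤ r'})
    (hT : ∀ ω, T ω = τ (U ω) (X ω)) (hR : ∀ ω, R ω = ρ (V ω) (X ω) (T ω))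
    (hX' : ∀ ω, X' ω = ξ (W ω) (X ω) (T ω) (R ω))
    (hT' : ∀ ω, T' ω = τ' (U' ω) (X' ω) (T ω) (R ω))
    (hR' : ∀ ω, R' ω = ρ' (V' ω) (X' ω) (T' ω) (T ω))
    (h0 : μ {ω | X ω = x ∧ T ω = t ∧ R ω = r ∧ X' ω = x' ∧ T' ω = t'} ≠ 0) :
    μ[{ω | R' ω ≤ r'} | {ω | X ω = x ∧ T ω = t ∧ R ω = r ∧ X' ω = x' ∧ T' ω = t'}]
      = μ[V' ⁻¹' {v | ρ' v x' t' t ≤ r'} | {ω | X ω = x}] := by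
  have hcond : {ω | X ω = x ∧ T ω = t ∧ R ω = r ∧ X' ω = x' ∧ T' ω = t'} = {ω | X ω = x} ∩
      ⋂ i, ![U, U', V, V', W] i ⁻¹' ![{u | τ u x = t}, {u | τ' u x' t r = t'},
        {v | ρ v x t = r}, univ, {w | ξ w x t r = x'}] i := by
    ext ω
    simp only [mem_inter_iff, mem_iInter, Fin.forall_fin_succ, IsEmpty.forall_iff, mem_preimage,
      mem_ofPred_eq, Matrix.cons_val_zero, Matrix.cons_val_succ, mem_univ]
    grind
  have hs : ∀ i, MeasurableSet (![{u | τ u x = t}, {u | τ' u x' t r = t'},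
      {v | ρ v x t = r}, univ, {w | ξ w x t r = x'}] i) := by
    intro i; fin_cases i <;> simp [hA, hB, hC, hD]
  rw [cond_congr_of_forall_mem_iff (hcond ▸ hX.inter (.iInter fun i => hZ i (hs i)))
    (b := V' ⁻¹' {v | ρ' v x' t' t ≤ r'}) ?_, hcond]
  · exact hind.cond_inter_iInter_preimage (j := 3) hX hZ hs rfl hE (hcond ▸ h0)
  · rintro ω ⟨rfl, hTω, -, hX'ω, hT'ω⟩
    simp [hR', hTω, hX'ω, hT'ω]

lemma measure_intervention_inter_fiber (hX : MeasurableSet {ω | X ω = x})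
    (hX0 : μ {ω | X ω = x} ≠ 0) (hind : iIndepFun ![U, U', V, V', W] μ[|{ω | X ω = x}])
    (hB : MeasurableSet {v | ρ v x t = r}) (hC : MeasurableSet {w | ξ w x t r = x'})
    (hE : MeasurableSet {v | ρ' v x' t' t ≤ r'}) :
    μ ({ω | ρ' (V' ω) (ξ (W ω) (X ω) t (ρ (V ω) (X ω) t)) t' t ≤ r'} ∩
        (fun ω => (ρ (V ω) (X ω) t, X ω, ξ (W ω) (X ω) t (ρ (V ω) (X ω) t))) ⁻¹' {(r, x, x')})
      = μ[V' ⁻¹' {v | ρ' v x' t' t ≤ r'} | {ω | X ω = x}] *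
        μ[W ⁻¹' {w | ξ w x t r = x'} | {ω | X ω = x}] *
        μ[V ⁻¹' {v | ρ v x t = r} | {ω | X ω = x}] * μ {ω | X ω = x} := by
  have hs : ∀ i, MeasurableSet (![univ, univ, {v | ρ v x t = r},
      {v | ρ' v x' t' t ≤ r'}, {w | ξ w x t r = x'}] i) := by
    intro i; fin_cases i <;> simp [hB, hC, hE]
  have : IsProbabilityMeasure μ[|{ω | X ω = x}] := cond_isProbabilityMeasure hX0
  rw [intervention_inter_fiber_eq, hind.measure_inter_iInter_preimage hX hs]
  simp [Fin.prod_univ_five]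
  ring

lemma g_formula_summand (hX : MeasurableSet {ω | X ω = x})
    (hZ : ∀ i, Measurable (![U, U', V, V', W] i))
    (hind : iIndepFun ![U, U', V, V', W] μ[|{ω | X ω = x}])
    (hA : MeasurableSet {u | τ u x = t}) (hB : MeasurableSet {v | ρ v x t = r})
    (hC : MeasurableSet {w | ξ w x t r = x'}) (hD : MeasurableSet {u | τ' u x' t r = t'})
    (hE : MeasurableSet {v | ρ' v x' t' t ≤ r'})
    (hT : ∀ ω, T ω = τ (U ω) (X ω)) (hR : ∀ ω, R ω = ρ (V ω) (X ω) (T ω))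
    (hX' : ∀ ω, X' ω = ξ (W ω) (X ω) (T ω) (R ω))
    (hT' : ∀ ω, T' ω = τ' (U' ω) (X' ω) (T ω) (R ω))
    (hR' : ∀ ω, R' ω = ρ' (V' ω) (X' ω) (T' ω) (T ω))
    (hpos : 0 < μ {ω | X ω = x ∧ T ω = t ∧ R ω = r ∧ X' ω = x' ∧ T' ω = t'}) :
    μ ({ω | ρ' (V' ω) (ξ (W ω) (X ω) t (ρ (V ω) (X ω) t)) t' t ≤ r'} ∩
        (fun ω => (ρ (V ω) (X ω) t, X ω, ξ (W ω) (X ω) t (ρ (V ω) (X ω) t))) ⁻¹' {(r, x, x')})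
      = μ[{ω | R' ω ≤ r'} | {ω | X ω = x ∧ T ω = t ∧ R ω = r ∧ X' ω = x' ∧ T' ω = t'}] *
        μ[{ω | X' ω = x'} | {ω | X ω = x ∧ T ω = t ∧ R ω = r}] *
        μ[{ω | R ω = r} | {ω | X ω = x ∧ T ω = t}] * μ {ω | X ω = x} := by
  have h2 : μ {ω | X ω = x ∧ T ω = t ∧ R ω = r} ≠ 0 :=
    ne_of_gt <| hpos.trans_le <| measure_mono fun _ hω => ⟨hω.1, hω.2.1, hω.2.2.1⟩
  have h1 : μ {ω | X ω = x ∧ T ω = t} ≠ 0 :=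
    ne_of_gt <| hpos.trans_le <| measure_mono fun _ hω => ⟨hω.1, hω.2.1⟩
  have h0 : μ {ω | X ω = x} ≠ 0 := ne_of_gt <| hpos.trans_le <| measure_mono fun _ hω => hω.1
  rw [measure_intervention_inter_fiber hX h0 hind hB hC hE,
    cond_R'_eq_cond_V' hX hZ hind hA hB hC hD hE hT hR hX' hT' hR' hpos.ne',
    cond_X'_eq_cond_W hX hZ hind hA hB hC hT hR hX' h2, cond_R_eq_cond_V hX hZ hind hA hB hT hR h1]

end GFormula

theorem robins_g_formula_general
    {Ω 𝒳 𝒯 ℛ 𝒳' 𝒯' : Type*} [MeasurableSpace Ω]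
    [MeasurableSpace 𝒳] [MeasurableSingletonClass 𝒳] [Countable 𝒳]
    [MeasurableSpace 𝒯] [MeasurableSingletonClass 𝒯]
    [MeasurableSpace ℛ] [MeasurableSingletonClass ℛ] [Countable ℛ]
    [MeasurableSpace 𝒳'] [MeasurableSingletonClass 𝒳'] [Countable 𝒳']
    [MeasurableSpace 𝒯'] [MeasurableSingletonClass 𝒯']
    (μ : Measure Ω) [IsProbabilityMeasure μ]
    (X : Ω → 𝒳) (hXmeas : Measurable X)
    (U U' V V' W : Ω → ℝ)
    (hU : Measurable U) (hU' : Measurable U') (hV : Measurable V)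
    (hV' : Measurable V') (hW : Measurable W)
    (hcondindep : ∀ x : 𝒳, 0 < μ {ω | X ω = x} →
      iIndepFun (m := fun _ => (inferInstance : MeasurableSpace ℝ))
        ![U, U', V, V', W] (μ[|{ω | X ω = x}]))
    (τ : ℝ → 𝒳 → 𝒯) (ρ : ℝ → 𝒳 → 𝒯 → ℛ) (ξ : ℝ → 𝒳 → 𝒯 → ℛ → 𝒳')
    (τ' : ℝ → 𝒳' → 𝒯 → ℛ → 𝒯') (ρ' : ℝ → 𝒳' → 𝒯' → 𝒯 → ℝ)
    (hτ : Measurable fun p : ℝ × 𝒳 => τ p.1 p.2)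
    (hρ : Measurable fun p : ℝ × 𝒳 × 𝒯 => ρ p.1 p.2.1 p.2.2)
    (hξ : Measurable fun p : ℝ × 𝒳 × 𝒯 × ℛ => ξ p.1 p.2.1 p.2.2.1 p.2.2.2)
    (hτ' : Measurable fun p : ℝ × 𝒳' × 𝒯 × ℛ => τ' p.1 p.2.1 p.2.2.1 p.2.2.2)
    (hρ' : Measurable fun p : ℝ × 𝒳' × 𝒯' × 𝒯 => ρ' p.1 p.2.1 p.2.2.1 p.2.2.2)
    (T : Ω → 𝒯) (hT : ∀ ω, T ω = τ (U ω) (X ω))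
    (R : Ω → ℛ) (hR : ∀ ω, R ω = ρ (V ω) (X ω) (T ω))
    (X' : Ω → 𝒳') (hX' : ∀ ω, X' ω = ξ (W ω) (X ω) (T ω) (R ω))
    (T' : Ω → 𝒯') (hT' : ∀ ω, T' ω = τ' (U' ω) (X' ω) (T ω) (R ω))
    (R' : Ω → ℝ) (hR' : ∀ ω, R' ω = ρ' (V' ω) (X' ω) (T' ω) (T ω))
    (t : 𝒯) (t' : 𝒯') (r' : ℝ)
    (hpos : ∀ (r : ℛ) (x : 𝒳) (x' : 𝒳'),
      0 < μ {ω | X ω = x ∧ T ω = t ∧ R ω = r ∧ X' ω = x' ∧ T' ω = t'}) :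
    μ {ω | ρ' (V' ω) (ξ (W ω) (X ω) t (ρ (V ω) (X ω) t)) t' t ≤ r'}
      = ∑' (r : ℛ) (x : 𝒳) (x' : 𝒳'),
          μ[|{ω | X ω = x ∧ T ω = t ∧ R ω = r ∧ X' ω = x' ∧ T' ω = t'}]
              {ω | R' ω ≤ r'} *
          μ[|{ω | X ω = x ∧ T ω = t ∧ R ω = r}] {ω | X' ω = x'} *
          μ[|{ω | X ω = x ∧ T ω = t}] {ω | R ω = r} *
          μ {ω | X ω = x} := by
  have hZ : ∀ i, Measurable (![U, U', V, V', W] i) := fun i => by fin_cases i <;> assumption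
  have hX x : MeasurableSet {ω | X ω = x} := hXmeas (measurableSet_singleton x)
  have hA x : MeasurableSet {u | τ u x = t} :=
    hτ.comp measurable_prodMk_right (measurableSet_singleton t)
  have hB x r : MeasurableSet {v | ρ v x t = r} :=
    hρ.comp (measurable_prodMk_right (y := (x, t))) (measurableSet_singleton r)
  have hC x r x' : MeasurableSet {w | ξ w x t r = x'} :=
    hξ.comp (measurable_prodMk_right (y := (x, t, r))) (measurableSet_singleton x')
  have hD x' r : MeasurableSet {u | τ' u x' t r = t'} :=
    hτ'.comp (measurable_prodMk_right (y := (x', t, r))) (measurableSet_singleton t')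
  have hE x' : MeasurableSet {v | ρ' v x' t' t ≤ r'} :=
    hρ'.comp (measurable_prodMk_right (y := (x', t', t))) measurableSet_Iic
  rw [measure_eq_tsum_inter_preimage_singleton
      (fun ω => (ρ (V ω) (X ω) t, X ω, ξ (W ω) (X ω) t (ρ (V ω) (X ω) t))) fun ⟨r, x, x'⟩ => by
      rw [intervention_inter_fiber_eq]
      refine (hX x).inter (.iInter fun i => hZ i ?_)
      fin_cases i <;> simp [hB, hC, hE],
    ENNReal.tsum_prod']
  refine tsum_congr fun r => ?_
  rw [ENNReal.tsum_prod']
  refine tsum_congr fun x => tsum_congr fun x' => ?_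
  have hind := hcondindep x ((hpos r x x').trans_le (measure_mono fun ω hω => hω.1))
  exact g_formula_summand (hX x) hZ hind (hA x) (hB x r) (hC x r x') (hD x' r) (hE x')
    hT hR hX' hT' hR' (hpos r x x')

/-- Robins' g-formula for two-stage treatments: in the model `T = τ(U,X)`,
`R = ρ(V,X,T)`, `X' = ξ(W,X,T,R)`, `T' = τ'(U',X',T,R)`, `R' = ρ'(V',X',T',T)`
with `U,U',V,V',W` standard uniforms that are mutually independent
conditionally on `X`, the law of the potential outcome
`ρ'(V', ξ(W,X,t,ρ(V,X,t)), t', t)` is given by the g-formula. -/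
theorem robins_g_formula
    {Ω 𝒳 𝒯 ℛ 𝒳' 𝒯' : Type*} [MeasurableSpace Ω]
    [MeasurableSpace 𝒳] [MeasurableSingletonClass 𝒳] [Countable 𝒳]
    [MeasurableSpace 𝒯] [MeasurableSingletonClass 𝒯] [Countable 𝒯]
    [MeasurableSpace ℛ] [MeasurableSingletonClass ℛ] [Countable ℛ]
    [MeasurableSpace 𝒳'] [MeasurableSingletonClass 𝒳'] [Countable 𝒳']
    [MeasurableSpace 𝒯'] [MeasurableSingletonClass 𝒯'] [Countable 𝒯']
    (μ : Measure Ω) [IsProbabilityMeasure μ]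
    (X : Ω → 𝒳) (hXmeas : Measurable X)
    (U U' V V' W : Ω → ℝ)
    (hU : Measurable U) (hU' : Measurable U') (hV : Measurable V)
    (hV' : Measurable V') (hW : Measurable W)
    (hcondindep : ∀ x : 𝒳, 0 < μ {ω | X ω = x} →
      iIndepFun (m := fun _ => (inferInstance : MeasurableSpace ℝ))
        ![U, U', V, V', W] (μ[|{ω | X ω = x}]))
    (hcondunif : ∀ x : 𝒳, 0 < μ {ω | X ω = x} → ∀ i : Fin 5,
      (μ[|{ω | X ω = x}]).map (![U, U', V, V', W] i)
        = volume.restrict (Set.Icc (0 : ℝ) 1))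
    (τ : ℝ → 𝒳 → 𝒯) (ρ : ℝ → 𝒳 → 𝒯 → ℛ) (ξ : ℝ → 𝒳 → 𝒯 → ℛ → 𝒳')
    (τ' : ℝ → 𝒳' → 𝒯 → ℛ → 𝒯') (ρ' : ℝ → 𝒳' → 𝒯' → 𝒯 → ℝ)
    (hτ : Measurable fun p : ℝ × 𝒳 => τ p.1 p.2)
    (hρ : Measurable fun p : ℝ × 𝒳 × 𝒯 => ρ p.1 p.2.1 p.2.2)
    (hξ : Measurable fun p : ℝ × 𝒳 × 𝒯 × ℛ => ξ p.1 p.2.1 p.2.2.1 p.2.2.2)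
    (hτ' : Measurable fun p : ℝ × 𝒳' × 𝒯 × ℛ => τ' p.1 p.2.1 p.2.2.1 p.2.2.2)
    (hρ' : Measurable fun p : ℝ × 𝒳' × 𝒯' × 𝒯 => ρ' p.1 p.2.1 p.2.2.1 p.2.2.2)
    (T : Ω → 𝒯) (hT : ∀ ω, T ω = τ (U ω) (X ω))
    (R : Ω → ℛ) (hR : ∀ ω, R ω = ρ (V ω) (X ω) (T ω))
    (X' : Ω → 𝒳') (hX' : ∀ ω, X' ω = ξ (W ω) (X ω) (T ω) (R ω))
    (T' : Ω → 𝒯') (hT' : ∀ ω, T' ω = τ' (U' ω) (X' ω) (T ω) (R ω))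
    (R' : Ω → ℝ) (hR' : ∀ ω, R' ω = ρ' (V' ω) (X' ω) (T' ω) (T ω))
    (t : 𝒯) (t' : 𝒯') (r' : ℝ)
    (hpos : ∀ (r : ℛ) (x : 𝒳) (x' : 𝒳'),
      0 < μ {ω | X ω = x ∧ T ω = t ∧ R ω = r ∧ X' ω = x' ∧ T' ω = t'}) :
    μ {ω | ρ' (V' ω) (ξ (W ω) (X ω) t (ρ (V ω) (X ω) t)) t' t ≤ r'}
      = ∑' (r : ℛ) (x : 𝒳) (x' : 𝒳'),
          μ[|{ω | X ω = x ∧ T ω = t ∧ R ω = r ∧ X' ω = x' ∧ T' ω = t'}]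
              {ω | R' ω ≤ r'} *
          μ[|{ω | X ω = x ∧ T ω = t ∧ R ω = r}] {ω | X' ω = x'} *
          μ[|{ω | X ω = x ∧ T ω = t}] {ω | R ω = r} *
          μ {ω | X ω = x} :=
  robins_g_formula_general μ X hXmeas U U' V V' W hU hU' hV hV' hW hcondindep τ ρ ξ τ' ρ' hτ hρ hξ
    hτ' hρ' T hT R hR X' hX' T' hT' R' hR' t t' r' hpos
end

section
/- Direct-effect identification (Pearl): in the model Y₄ = φ₄(ε₄), U = φ₅(ε₅), Y₃ = φ₃(Y₄,U,ε₃), Y₂ = φ₂(Y₃,Y₄,ε₂), Y₁ = φ₁(Y₂,Y₄,U,ε₁), with ε₁,...,ε₅ independent, the intervention probability p_t^{(y₂)}(y) := P(Ŷ₁ = y | Ŷ₄ = t), where Ŷ₁ = φ₁(y₂,Ŷ₄,Û,ε̂₁), Ŷ₃ = φ₃(Ŷ₄,Û,ε̂₃), Ŷ₄ = φ₄(ε̂₄), Û = φ₅(ε̂₅) with (Û,ε̂₁,ε̂₃,ε̂₄) distributed as (U,ε₁,ε₃,ε₄), satisfies p_t^{(y₂)}(y) = Σ_{y₃} P(Y₁=y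 | Y₂=y₂, Y₃=y₃, Y₄=t) P(Y₃=y₃ | Y₄=t). -/
/-!
Let `Z := φ₁(y₂, Y₄, U, ε₁)` be the outcome of the observational world had the second treatment
been set to `y₂`. The pair `(Ŷ₁, Ŷ₄)` is the same function of the fresh noise as `(Z, Y₄)` is of
the original one, so `p_t^{(y₂)}(y) = P(Z = y | Y₄ = t)`. On `{Y₂ = y₂}` we have `Y₁ = Z`, and once
`Y₃ = y₃, Y₄ = t` are fixed, the event `{Y₂ = y₂}` is an event about `ε₂` alone, which is
independent of `(Z, Y₃, Y₄)`. Hence `P(Y₁ = y | Y₂ = y₂, Y₃ = y₃, Y₄ = t) = P(Z = y | Y₃ = y₃,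
Y₄ = t)`, and the law of total probability over `Y₃` gives the adjustment formula.
-/

open MeasureTheory ProbabilityTheory

namespace ProbabilityTheory

variable {Ω α β : Type*} [MeasurableSpace Ω] [MeasurableSpace α] [MeasurableSpace β]
  {μ ν : Measure Ω}

lemma IdentDistrib.cond_preimage_eq {X Y : Ω → α} (h : IdentDistrib X Y μ ν)
    (hX : Measurable X) (hY : Measurable Y) {s t : Set α} (hs : MeasurableSet s)
    (ht : MeasurableSet t) : μ[X ⁻¹' t | X ⁻¹' s] = ν[Y ⁻¹' t | Y ⁻¹' s] := by
  rw [cond_apply (hX hs), cond_apply (hY hs), ← Set.preimage_inter, ← Set.preimage_inter,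
    h.measure_mem_eq hs, h.measure_mem_eq (hs.inter ht)]

lemma IndepFun.cond_inter_preimage_eq [IsFiniteMeasure μ] {X : Ω → α} {V : Ω → β}
    (h : IndepFun X V μ) (hV : Measurable V) {s : Set α} {t u : Set β} (hs : MeasurableSet s)
    (ht : MeasurableSet t) (hu : MeasurableSet u) (hpos : μ (X ⁻¹' s ∩ V ⁻¹' t) ≠ 0) :
    μ[V ⁻¹' u | X ⁻¹' s ∩ V ⁻¹' t] = μ[V ⁻¹' u | V ⁻¹' t] := by
  have hsplit : ∀ r, MeasurableSet r → μ (X ⁻¹' s ∩ V ⁻¹' r) = μ (X ⁻¹' s) * μ (V ⁻¹' r) :=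
    fun r hr => h.measure_inter_preimage_eq_mul _ _ hs hr
  have hXs : μ (X ⁻¹' s) ≠ 0 := fun h0 => hpos (measure_inter_null_of_null_left _ h0)
  rw [cond_apply' (hV hu), cond_apply' (hV hu), Set.inter_assoc, ← Set.preimage_inter,
    hsplit t ht, hsplit _ (ht.inter hu), ENNReal.mul_inv (.inl hXs) (.inl (measure_ne_top _ _)),
    mul_mul_mul_comm, ENNReal.inv_mul_cancel hXs (measure_ne_top _ _), one_mul]

lemma tsum_cond_inter_mul_cond [IsFiniteMeasure μ] [Countable β] [MeasurableSingletonClass β]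
    {Y : Ω → β} (hY : Measurable Y) {F : Set Ω} (hF : MeasurableSet F) {E : Set Ω}
    (hE : MeasurableSet E) :
    ∑' b, μ[E | F ∩ Y ⁻¹' {b}] * μ[Y ⁻¹' {b} | F] = μ[E | F] := by
  have hfiber : ∀ b, MeasurableSet (Y ⁻¹' {b}) := fun b => hY (measurableSet_singleton b)
  simp_rw [← cond_cond_eq_cond_inter hF (hfiber _), cond_mul_eq_inter (hfiber _)]
  have hdisj : Pairwise (Function.onFun Disjoint fun b => Y ⁻¹' {b} ∩ E) := fun a b hab =>
    ((Set.disjoint_singleton.2 hab).preimage Y).mono Set.inter_subset_left Set.inter_subset_left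
  rw [← measure_iUnion hdisj fun b => (hfiber b).inter hE, ← Set.iUnion_inter,
    ← Set.preimage_iUnion, Set.iUnion_of_singleton, Set.preimage_univ, Set.univ_inter]

lemma iIndepFun.indepFun_one_zero_two_three_four {ε : Fin 5 → Ω → α} (h : iIndepFun ε μ)
    (hε : ∀ i, Measurable (ε i)) :
    IndepFun (ε 1) (fun ω => (ε 0 ω, ε 2 ω, ε 3 ω, ε 4 ω)) μ := by
  have hST := h.indepFun_finset {1} {0, 2, 3, 4} (by decide) hε
  exact hST.comp (φ := fun v : ({1} : Finset (Fin 5)) → α => v ⟨1, by simp⟩)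
    (ψ := fun v : ({0, 2, 3, 4} : Finset (Fin 5)) → α =>
      (v ⟨0, by simp⟩, v ⟨2, by simp⟩, v ⟨3, by simp⟩, v ⟨4, by simp⟩))
    (by fun_prop) (by fun_prop)

variable {γ δ κ ξ : Type*} [MeasurableSpace γ] [MeasurableSingletonClass γ]
  [MeasurableSpace δ] [MeasurableSingletonClass δ] [MeasurableSpace κ] [MeasurableSingletonClass κ]
  [MeasurableSpace ξ]

/-- The back-door adjustment formula. -/
lemma tsum_cond_mul_cond_eq_cond_of_indepFun [IsFiniteMeasure μ] [Countable β]
    [MeasurableSingletonClass β] {X : Ω → ξ} {Z : Ω → γ} {Y₃ : Ω → β} {Y₄ : Ω → δ}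
    (hX : Measurable X) (hZ : Measurable Z) (hY₃ : Measurable Y₃) (hY₄ : Measurable Y₄)
    (hindep : IndepFun X (fun ω => (Z ω, Y₃ ω, Y₄ ω)) μ)
    {ψ : β → δ → ξ → κ} (hψ : ∀ b d, Measurable (ψ b d)) {Y₁ : Ω → γ} {Y₂ : Ω → κ}
    (hY₂ : ∀ ω, Y₂ ω = ψ (Y₃ ω) (Y₄ ω) (X ω)) {y₂ : κ} (hY₁ : ∀ ω, Y₂ ω = y₂ → Y₁ ω = Z ω)
    {t : δ} (hpos : ∀ b, μ {ω | Y₂ ω = y₂ ∧ Y₃ ω = b ∧ Y₄ ω = t} ≠ 0) (y : γ) :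
    ∑' b, μ[{ω | Y₁ ω = y} | {ω | Y₂ ω = y₂ ∧ Y₃ ω = b ∧ Y₄ ω = t}] *
        μ[{ω | Y₃ ω = b} | {ω | Y₄ ω = t}] = μ[{ω | Z ω = y} | {ω | Y₄ ω = t}] := by
  set V := fun ω => (Z ω, Y₃ ω, Y₄ ω)
  have hV : Measurable V := hZ.prodMk (hY₃.prodMk hY₄)
  refine (tsum_congr fun b => congr_arg₂ (· * ·) ?_ rfl).trans
    (tsum_cond_inter_mul_cond hY₃ (hY₄ (measurableSet_singleton t))
      (hZ (measurableSet_singleton y)))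
  set S := {ω | Y₂ ω = y₂ ∧ Y₃ ω = b ∧ Y₄ ω = t}
  have hT : MeasurableSet {p : γ × β × δ | p.2.1 = b ∧ p.2.2 = t} :=
    (measurable_snd.fst (measurableSet_singleton b)).inter
      (measurable_snd.snd (measurableSet_singleton t))
  have hS : S = X ⁻¹' {x | ψ b t x = y₂} ∩ V ⁻¹' {p | p.2.1 = b ∧ p.2.2 = t} := by
    ext ω
    simp only [S, V, Set.mem_ofPred_eq, Set.mem_inter_iff, Set.mem_preimage, hY₂]
    grind
  have hSZ : S ∩ {ω | Y₁ ω = y} = S ∩ V ⁻¹' {p | p.1 = y} := by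
    ext ω
    simp only [S, V, Set.mem_ofPred_eq, Set.mem_inter_iff, Set.mem_preimage]
    grind
  have hSm : MeasurableSet S := by
    rw [hS]
    exact (hX (hψ b t (measurableSet_singleton y₂))).inter (hV hT)
  calc μ[{ω | Y₁ ω = y} | S]
      = μ[V ⁻¹' {p | p.1 = y} | S] := by rw [cond_apply hSm, cond_apply hSm, hSZ]
    _ = μ[V ⁻¹' {p | p.1 = y} | V ⁻¹' {p | p.2.1 = b ∧ p.2.2 = t}] := by
        rw [hS]
        exact hindep.cond_inter_preimage_eq hV (hψ b t (measurableSet_singleton y₂)) hT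
          (measurable_fst (measurableSet_singleton y)) (hS ▸ hpos b)
    _ = μ[{ω | Z ω = y} | {ω | Y₄ ω = t} ∩ Y₃ ⁻¹' {b}] := by
        congr 2
        ext ω
        simp [V, and_comm]

end ProbabilityTheory

theorem direct_effect_identification_general
    {Ω 𝒴₁ 𝒴₂ 𝒴₃ 𝒴₄ 𝒰 : Type*} [MeasurableSpace Ω]
    [MeasurableSpace 𝒴₁] [MeasurableSingletonClass 𝒴₁]
    [MeasurableSpace 𝒴₂] [MeasurableSingletonClass 𝒴₂]
    [MeasurableSpace 𝒴₃] [MeasurableSingletonClass 𝒴₃] [Countable 𝒴₃]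
    [MeasurableSpace 𝒴₄] [MeasurableSingletonClass 𝒴₄]
    [MeasurableSpace 𝒰]
    (μ : Measure Ω) [IsProbabilityMeasure μ]
    (ε : Fin 5 → Ω → ℝ) (hε : ∀ i, Measurable (ε i))
    (hindep : iIndepFun ε μ)
    (φ₁ : 𝒴₂ → 𝒴₄ → 𝒰 → ℝ → 𝒴₁) (φ₂ : 𝒴₃ → 𝒴₄ → ℝ → 𝒴₂)
    (φ₃ : 𝒴₄ → 𝒰 → ℝ → 𝒴₃) (φ₄ : ℝ → 𝒴₄) (φ₅ : ℝ → 𝒰)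
    (hφ₁ : Measurable fun p : 𝒴₂ × 𝒴₄ × 𝒰 × ℝ => φ₁ p.1 p.2.1 p.2.2.1 p.2.2.2)
    (hφ₂ : Measurable fun p : 𝒴₃ × 𝒴₄ × ℝ => φ₂ p.1 p.2.1 p.2.2)
    (hφ₃ : Measurable fun p : 𝒴₄ × 𝒰 × ℝ => φ₃ p.1 p.2.1 p.2.2)
    (hφ₄ : Measurable φ₄) (hφ₅ : Measurable φ₅)
    -- observational model
    (Y₄ : Ω → 𝒴₄) (hY₄ : ∀ ω, Y₄ ω = φ₄ (ε 3 ω))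
    (Uv : Ω → 𝒰) (hUv : ∀ ω, Uv ω = φ₅ (ε 4 ω))
    (Y₃ : Ω → 𝒴₃) (hY₃ : ∀ ω, Y₃ ω = φ₃ (Y₄ ω) (Uv ω) (ε 2 ω))
    (Y₂ : Ω → 𝒴₂) (hY₂ : ∀ ω, Y₂ ω = φ₂ (Y₃ ω) (Y₄ ω) (ε 1 ω))
    (Y₁ : Ω → 𝒴₁) (hY₁ : ∀ ω, Y₁ ω = φ₁ (Y₂ ω) (Y₄ ω) (Uv ω) (ε 0 ω))
    -- intervention model: second treatment fixed at y₂, fresh noise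
    (y₂ : 𝒴₂) (εh₁ εh₃ εh₄ εh₅ : Ω → ℝ)
    (hεh : Measurable εh₁ ∧ Measurable εh₃ ∧ Measurable εh₄ ∧ Measurable εh₅)
    (hεhdist : μ.map (fun ω => (εh₁ ω, εh₃ ω, εh₄ ω, εh₅ ω))
        = μ.map (fun ω => (ε 0 ω, ε 2 ω, ε 3 ω, ε 4 ω)))
    (Yh₄ : Ω → 𝒴₄) (hYh₄ : ∀ ω, Yh₄ ω = φ₄ (εh₄ ω))
    (Uh : Ω → 𝒰) (hUh : ∀ ω, Uh ω = φ₅ (εh₅ ω))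
    (Yh₁ : Ω → 𝒴₁) (hYh₁ : ∀ ω, Yh₁ ω = φ₁ y₂ (Yh₄ ω) (Uh ω) (εh₁ ω))
    (t : 𝒴₄) (y : 𝒴₁)
    (hpos : ∀ y₃ : 𝒴₃, 0 < μ {ω | Y₂ ω = y₂ ∧ Y₃ ω = y₃ ∧ Y₄ ω = t}) :
    μ[|{ω | Yh₄ ω = t}] {ω | Yh₁ ω = y}
      = ∑' y₃ : 𝒴₃,
          μ[|{ω | Y₂ ω = y₂ ∧ Y₃ ω = y₃ ∧ Y₄ ω = t}] {ω | Y₁ ω = y} *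
          μ[|{ω | Y₄ ω = t}] {ω | Y₃ ω = y₃} := by
  obtain ⟨hεh₁, hεh₃, hεh₄, hεh₅⟩ := hεh
  set g : ℝ × ℝ × ℝ × ℝ → 𝒴₁ × 𝒴₃ × 𝒴₄ := fun e =>
    (φ₁ y₂ (φ₄ e.2.2.1) (φ₅ e.2.2.2) e.1, φ₃ (φ₄ e.2.2.1) (φ₅ e.2.2.2) e.2.1, φ₄ e.2.2.1)
  have hg : Measurable g := by
    refine .prodMk ?_ (.prodMk ?_ (by fun_prop))
    · exact hφ₁.comp (f := fun e : ℝ × ℝ × ℝ × ℝ => (y₂, φ₄ e.2.2.1, φ₅ e.2.2.2, e.1))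
        (by fun_prop)
    · exact hφ₃.comp (f := fun e : ℝ × ℝ × ℝ × ℝ => (φ₄ e.2.2.1, φ₅ e.2.2.2, e.2.1))
        (by fun_prop)
  set Z := fun ω => φ₁ y₂ (Y₄ ω) (Uv ω) (ε 0 ω)
  have hobs : (fun ω => (Z ω, Y₃ ω, Y₄ ω)) = g ∘ fun ω => (ε 0 ω, ε 2 ω, ε 3 ω, ε 4 ω) := by
    funext ω
    simp [g, Z, hY₃, hY₄, hUv]
  have hint : (fun ω => (Yh₁ ω, Yh₄ ω))
      = (fun p => (p.1, p.2.2)) ∘ g ∘ fun ω => (εh₁ ω, εh₃ ω, εh₄ ω, εh₅ ω) := by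
    funext ω
    simp [g, hYh₁, hYh₄, hUh]
  have hV : Measurable fun ω => (Z ω, Y₃ ω, Y₄ ω) := hobs ▸ hg.comp (by fun_prop)
  have hident : IdentDistrib (fun ω => (Yh₁ ω, Yh₄ ω)) (fun ω => (Z ω, Y₄ ω)) μ μ := by
    rw [hint, show (fun ω => (Z ω, Y₄ ω)) = (fun p => (p.1, p.2.2)) ∘ fun ω => (Z ω, Y₃ ω, Y₄ ω)
      from rfl, hobs]
    exact (IdentDistrib.mk (by fun_prop) (by fun_prop) hεhdist).comp
      ((measurable_fst.prodMk measurable_snd.snd).comp hg)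
  have hLHS : μ[{ω | Yh₁ ω = y} | {ω | Yh₄ ω = t}] = μ[{ω | Z ω = y} | {ω | Y₄ ω = t}] :=
    hident.cond_preimage_eq (hint ▸ by fun_prop) (hV.fst.prodMk hV.snd.snd)
      (measurable_snd (measurableSet_singleton t)) (measurable_fst (measurableSet_singleton y))
  rw [hLHS, eq_comm]
  exact tsum_cond_mul_cond_eq_cond_of_indepFun (hε 1) hV.fst hV.snd.fst hV.snd.snd
    (hobs ▸ (hindep.indepFun_one_zero_two_three_four hε).comp measurable_id hg) (ψ := φ₂)
    (fun b d => hφ₂.comp (f := fun e => (b, d, e)) (by fun_prop)) hY₂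
    (fun ω h => by simp [Z, hY₁, h]) (fun b => (hpos b).ne') y

/-- Direct-effect identification (Pearl): in the model `Y₄ = φ₄(ε₄)`,
`U = φ₅(ε₅)`, `Y₃ = φ₃(Y₄,U,ε₃)`, `Y₂ = φ₂(Y₃,Y₄,ε₂)`, `Y₁ = φ₁(Y₂,Y₄,U,ε₁)`
with independent `ε₁,...,ε₅`, the intervention probability
`p_t^{(y₂)}(y) = P(Ŷ₁ = y | Ŷ₄ = t)` (second treatment fixed at `y₂`) equals
`Σ_{y₃} P(Y₁=y | Y₂=y₂, Y₃=y₃, Y₄=t) P(Y₃=y₃ | Y₄=t)`. -/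
theorem direct_effect_identification
    {Ω 𝒴₁ 𝒴₂ 𝒴₃ 𝒴₄ 𝒰 : Type*} [MeasurableSpace Ω]
    [MeasurableSpace 𝒴₁] [MeasurableSingletonClass 𝒴₁] [Countable 𝒴₁]
    [MeasurableSpace 𝒴₂] [MeasurableSingletonClass 𝒴₂] [Countable 𝒴₂]
    [MeasurableSpace 𝒴₃] [MeasurableSingletonClass 𝒴₃] [Countable 𝒴₃]
    [MeasurableSpace 𝒴₄] [MeasurableSingletonClass 𝒴₄] [Countable 𝒴₄]
    [MeasurableSpace 𝒰] [MeasurableSingletonClass 𝒰] [Countable 𝒰]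
    (μ : Measure Ω) [IsProbabilityMeasure μ]
    (ε : Fin 5 → Ω → ℝ) (hε : ∀ i, Measurable (ε i))
    (hindep : iIndepFun ε μ)
    (φ₁ : 𝒴₂ → 𝒴₄ → 𝒰 → ℝ → 𝒴₁) (φ₂ : 𝒴₃ → 𝒴₄ → ℝ → 𝒴₂)
    (φ₃ : 𝒴₄ → 𝒰 → ℝ → 𝒴₃) (φ₄ : ℝ → 𝒴₄) (φ₅ : ℝ → 𝒰)
    (hφ₁ : Measurable fun p : 𝒴₂ × 𝒴₄ × 𝒰 × ℝ => φ₁ p.1 p.2.1 p.2.2.1 p.2.2.2)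
    (hφ₂ : Measurable fun p : 𝒴₃ × 𝒴₄ × ℝ => φ₂ p.1 p.2.1 p.2.2)
    (hφ₃ : Measurable fun p : 𝒴₄ × 𝒰 × ℝ => φ₃ p.1 p.2.1 p.2.2)
    (hφ₄ : Measurable φ₄) (hφ₅ : Measurable φ₅)
    -- observational model
    (Y₄ : Ω → 𝒴₄) (hY₄ : ∀ ω, Y₄ ω = φ₄ (ε 3 ω))
    (Uv : Ω → 𝒰) (hUv : ∀ ω, Uv ω = φ₅ (ε 4 ω))
    (Y₃ : Ω → 𝒴₃) (hY₃ : ∀ ω, Y₃ ω = φ₃ (Y₄ ω) (Uv ω) (ε 2 ω))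
    (Y₂ : Ω → 𝒴₂) (hY₂ : ∀ ω, Y₂ ω = φ₂ (Y₃ ω) (Y₄ ω) (ε 1 ω))
    (Y₁ : Ω → 𝒴₁) (hY₁ : ∀ ω, Y₁ ω = φ₁ (Y₂ ω) (Y₄ ω) (Uv ω) (ε 0 ω))
    -- intervention model: second treatment fixed at y₂, fresh noise
    (y₂ : 𝒴₂) (εh₁ εh₃ εh₄ εh₅ : Ω → ℝ)
    (hεh : Measurable εh₁ ∧ Measurable εh₃ ∧ Measurable εh₄ ∧ Measurable εh₅)
    (hεhdist : μ.map (fun ω => (εh₁ ω, εh₃ ω, εh₄ ω, εh₅ ω))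
        = μ.map (fun ω => (ε 0 ω, ε 2 ω, ε 3 ω, ε 4 ω)))
    (Yh₄ : Ω → 𝒴₄) (hYh₄ : ∀ ω, Yh₄ ω = φ₄ (εh₄ ω))
    (Uh : Ω → 𝒰) (hUh : ∀ ω, Uh ω = φ₅ (εh₅ ω))
    (Yh₃ : Ω → 𝒴₃) (hYh₃ : ∀ ω, Yh₃ ω = φ₃ (Yh₄ ω) (Uh ω) (εh₃ ω))
    (Yh₁ : Ω → 𝒴₁) (hYh₁ : ∀ ω, Yh₁ ω = φ₁ y₂ (Yh₄ ω) (Uh ω) (εh₁ ω))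
    (t : 𝒴₄) (y : 𝒴₁)
    (hposY₄ : 0 < μ {ω | Y₄ ω = t}) (hposYh₄ : 0 < μ {ω | Yh₄ ω = t})
    (hpos : ∀ y₃ : 𝒴₃, 0 < μ {ω | Y₂ ω = y₂ ∧ Y₃ ω = y₃ ∧ Y₄ ω = t}) :
    μ[|{ω | Yh₄ ω = t}] {ω | Yh₁ ω = y}
      = ∑' y₃ : 𝒴₃,
          μ[|{ω | Y₂ ω = y₂ ∧ Y₃ ω = y₃ ∧ Y₄ ω = t}] {ω | Y₁ ω = y} *
          μ[|{ω | Y₄ ω = t}] {ω | Y₃ ω = y₃} :=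
  direct_effect_identification_general μ ε hε hindep φ₁ φ₂ φ₃ φ₄ φ₅ hφ₁ hφ₂ hφ₃ hφ₄ hφ₅ Y₄ hY₄ Uv
    hUv Y₃ hY₃ Y₂ hY₂ Y₁ hY₁ y₂ εh₁ εh₃ εh₄ εh₅ hεh hεhdist Yh₄ hYh₄ Uh hUh Yh₁ hYh₁ t y hpos
end

section
/- Sex-discrimination intervention identity: in the model S = φ₄(ε₄), B = φ₃(S,ε₃), Q = φ₂(B,S,ε₂), H = φ₁(B,Q,S,ε₁) with ε₁,...,ε₄ independent, and the intervention model B'_s = φ₃(s,ε'₃), Q'_s = φ₂(B'_s,s,ε'₂), H'_s = φ₁(B'_s,Q'_s,σ_s,ε'₁), where ε'₁,ε'₂,ε'₃,σ_s are independent and (ε'₁,ε'₂,ε'₃) has the same distribution as (ε₁,ε₂,ε₃), one has P(H'_s = h | B'_s = b, Q'_s = q) = Σ_{s'} P(H = h | B = b, Q = q, S = s') P(σ_s = s'). -/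
open MeasureTheory ProbabilityTheory

/-- Sex-discrimination intervention identity: in the model `S = φ₄(ε₄)`,
`B = φ₃(S,ε₃)`, `Q = φ₂(B,S,ε₂)`, `H = φ₁(B,Q,S,ε₁)` with independent
`ε₁,...,ε₄`, and the intervention model `B'_s = φ₃(s,ε'₃)`,
`Q'_s = φ₂(B'_s,s,ε'₂)`, `H'_s = φ₁(B'_s,Q'_s,σ_s,ε'₁)` with
`ε'₁,ε'₂,ε'₃,σ_s` independent and `(ε'₁,ε'₂,ε'₃)` distributed as
`(ε₁,ε₂,ε₃)`, one has
`P(H'_s = h | B'_s = b, Q'_s = q) = Σ_{s'} P(H=h | B=b, Q=q, S=s') P(σ_s = s')`. -/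
theorem sex_discrimination_intervention
    {Ω 𝓑 𝓠 𝓗 : Type*} [MeasurableSpace Ω]
    [MeasurableSpace 𝓑] [MeasurableSingletonClass 𝓑] [Countable 𝓑]
    [MeasurableSpace 𝓠] [MeasurableSingletonClass 𝓠] [Countable 𝓠]
    [MeasurableSpace 𝓗] [MeasurableSingletonClass 𝓗] [Countable 𝓗]
    (μ : Measure Ω) [IsProbabilityMeasure μ]
    (ε : Fin 4 → Ω → ℝ) (hε : ∀ i, Measurable (ε i))
    (hindep : iIndepFun (m := fun _ => (inferInstance : MeasurableSpace ℝ)) ε μ)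
    (φ₁ : 𝓑 → 𝓠 → Fin 2 → ℝ → 𝓗) (φ₂ : 𝓑 → Fin 2 → ℝ → 𝓠)
    (φ₃ : Fin 2 → ℝ → 𝓑) (φ₄ : ℝ → Fin 2)
    (hφ₁ : Measurable fun p : 𝓑 × 𝓠 × Fin 2 × ℝ => φ₁ p.1 p.2.1 p.2.2.1 p.2.2.2)
    (hφ₂ : Measurable fun p : 𝓑 × Fin 2 × ℝ => φ₂ p.1 p.2.1 p.2.2)
    (hφ₃ : Measurable fun p : Fin 2 × ℝ => φ₃ p.1 p.2)
    (hφ₄ : Measurable φ₄)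
    -- observational model
    (S : Ω → Fin 2) (hS : ∀ ω, S ω = φ₄ (ε 3 ω))
    (B : Ω → 𝓑) (hB : ∀ ω, B ω = φ₃ (S ω) (ε 2 ω))
    (Q : Ω → 𝓠) (hQ : ∀ ω, Q ω = φ₂ (B ω) (S ω) (ε 1 ω))
    (H : Ω → 𝓗) (hH : ∀ ω, H ω = φ₁ (B ω) (Q ω) (S ω) (ε 0 ω))
    -- intervention model with sex fixed at s and assumed sex σ
    (s : Fin 2) (ε'₁ ε'₂ ε'₃ : Ω → ℝ) (σ : Ω → Fin 2)
    (hε' : Measurable ε'₁ ∧ Measurable ε'₂ ∧ Measurable ε'₃) (hσ : Measurable σ)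
    (hσindep : IndepFun σ (fun ω => (ε'₁ ω, ε'₂ ω, ε'₃ ω)) μ)
    (hε'dist : μ.map (fun ω => (ε'₁ ω, ε'₂ ω, ε'₃ ω))
        = μ.map (fun ω => (ε 0 ω, ε 1 ω, ε 2 ω)))
    (B' : Ω → 𝓑) (hB' : ∀ ω, B' ω = φ₃ s (ε'₃ ω))
    (Q' : Ω → 𝓠) (hQ' : ∀ ω, Q' ω = φ₂ (B' ω) s (ε'₂ ω))
    (H' : Ω → 𝓗) (hH' : ∀ ω, H' ω = φ₁ (B' ω) (Q' ω) (σ ω) (ε'₁ ω))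
    (b : 𝓑) (q : 𝓠) (h : 𝓗)
    (hpos' : 0 < μ {ω | B' ω = b ∧ Q' ω = q})
    (hpos : ∀ s' : Fin 2, 0 < μ {ω | σ ω = s'} →
      0 < μ {ω | B ω = b ∧ Q ω = q ∧ S ω = s'}) :
    μ[|{ω | B' ω = b ∧ Q' ω = q}] {ω | H' ω = h}
      = ∑' s' : Fin 2,
          μ[|{ω | B ω = b ∧ Q ω = q ∧ S ω = s'}] {ω | H ω = h} *
          μ {ω | σ ω = s'} := by
  classical
  obtain ⟨hε'₁, hε'₂, hε'₃⟩ := hε'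
  -- the basic real-line events
  set A0 : Fin 2 → Set ℝ := fun s' => {x | φ₁ b q s' x = h} with hA0
  set A1 : Fin 2 → Set ℝ := fun t => {y | φ₂ b t y = q} with hA1
  set A2 : Fin 2 → Set ℝ := fun t => {z | φ₃ t z = b} with hA2
  set A3 : Fin 2 → Set ℝ := fun s' => {w | φ₄ w = s'} with hA3
  have mA0 : ∀ s', MeasurableSet (A0 s') := by
    intro s'
    have : Measurable fun x : ℝ => φ₁ b q s' x :=
      hφ₁.comp (measurable_const.prodMk (measurable_const.prodMk
        (measurable_const.prodMk measurable_id)))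
    exact this (measurableSet_singleton h)
  have mA1 : ∀ t, MeasurableSet (A1 t) := by
    intro t
    have : Measurable fun y : ℝ => φ₂ b t y :=
      hφ₂.comp (measurable_const.prodMk (measurable_const.prodMk measurable_id))
    exact this (measurableSet_singleton q)
  have mA2 : ∀ t, MeasurableSet (A2 t) := by
    intro t
    have : Measurable fun z : ℝ => φ₃ t z :=
      hφ₃.comp (measurable_const.prodMk measurable_id)
    exact this (measurableSet_singleton b)
  have mA3 : ∀ s', MeasurableSet (A3 s') := fun s' => hφ₄ (measurableSet_singleton s')
  -- independence of the four observational noises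
  have key : ∀ (T0 T1 T2 T3 : Set ℝ), MeasurableSet T0 → MeasurableSet T1 →
      MeasurableSet T2 → MeasurableSet T3 →
      μ ((ε 0)⁻¹' T0 ∩ ((ε 1)⁻¹' T1 ∩ ((ε 2)⁻¹' T2 ∩ (ε 3)⁻¹' T3)))
        = μ ((ε 0)⁻¹' T0) * (μ ((ε 1)⁻¹' T1) * (μ ((ε 2)⁻¹' T2) * μ ((ε 3)⁻¹' T3))) := by
    intro T0 T1 T2 T3 h0 h1 h2 h3
    have key := hindep.meas_iInter (s := fun i => (ε i)⁻¹' (![T0,T1,T2,T3] i))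
      (fun i => ⟨![T0,T1,T2,T3] i, by fin_cases i <;> assumption, rfl⟩)
    have e1 : (⋂ i, (ε i)⁻¹' (![T0,T1,T2,T3] i))
        = (ε 0)⁻¹' T0 ∩ ((ε 1)⁻¹' T1 ∩ ((ε 2)⁻¹' T2 ∩ (ε 3)⁻¹' T3)) := by
      ext x; simp [Set.mem_iInter, Fin.forall_fin_succ,
        show (Fin.succ 2 : Fin 4) = 3 from rfl]
    rw [e1, Fin.prod_univ_four] at key
    simpa [mul_assoc] using key
  -- the triples
  set trip : Ω → ℝ × ℝ × ℝ := fun ω => (ε 0 ω, ε 1 ω, ε 2 ω) with htripdef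
  set trip' : Ω → ℝ × ℝ × ℝ := fun ω => (ε'₁ ω, ε'₂ ω, ε'₃ ω) with htrip'def
  have mtrip : Measurable trip := (hε 0).prodMk ((hε 1).prodMk (hε 2))
  have mtrip' : Measurable trip' := hε'₁.prodMk (hε'₂.prodMk hε'₃)
  have hmap : ∀ T : Set (ℝ × ℝ × ℝ), MeasurableSet T →
      μ (trip'⁻¹' T) = μ (trip⁻¹' T) := by
    intro T hT
    rw [← Measure.map_apply mtrip' hT, ← Measure.map_apply mtrip hT, hε'dist]
  -- observational events
  have hF : ∀ s', {ω | B ω = b ∧ Q ω = q ∧ S ω = s'}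
      = (ε 1)⁻¹' A1 s' ∩ ((ε 2)⁻¹' A2 s' ∩ (ε 3)⁻¹' A3 s') := by
    intro s'; ext ω
    simp only [Set.mem_setOf_eq, Set.mem_inter_iff, Set.mem_preimage, hA1, hA2, hA3]
    constructor
    · rintro ⟨h1, h2, h3⟩
      have h3' : φ₄ (ε 3 ω) = s' := by rw [← hS ω]; exact h3
      refine ⟨?_, ?_, h3'⟩
      · rw [hQ ω, h1, h3] at h2; exact h2
      · rw [hB ω, h3] at h1; exact h1
    · rintro ⟨h1, h2, h3⟩
      have h3' : S ω = s' := by rw [hS ω]; exact h3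
      have hb : B ω = b := by rw [hB ω, h3']; exact h2
      exact ⟨hb, by rw [hQ ω, hb, h3']; exact h1, h3'⟩
  have hFH : ∀ s', {ω | B ω = b ∧ Q ω = q ∧ S ω = s'} ∩ {ω | H ω = h}
      = (ε 0)⁻¹' A0 s' ∩ ((ε 1)⁻¹' A1 s' ∩ ((ε 2)⁻¹' A2 s' ∩ (ε 3)⁻¹' A3 s')) := by
    intro s'; ext ω
    simp only [Set.mem_inter_iff, Set.mem_setOf_eq, Set.mem_preimage, hA0, hA1, hA2, hA3]
    constructor
    · rintro ⟨⟨h1, h2, h3⟩, h4⟩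
      have h3' : φ₄ (ε 3 ω) = s' := by rw [← hS ω]; exact h3
      refine ⟨?_, ?_, ?_, h3'⟩
      · rw [hH ω, h1, h2, h3] at h4; exact h4
      · rw [hQ ω, h1, h3] at h2; exact h2
      · rw [hB ω, h3] at h1; exact h1
    · rintro ⟨h0', h1, h2, h3⟩
      have h3' : S ω = s' := by rw [hS ω]; exact h3
      have hb : B ω = b := by rw [hB ω, h3']; exact h2
      have hq : Q ω = q := by rw [hQ ω, hb, h3']; exact h1
      exact ⟨⟨hb, hq, h3'⟩, by rw [hH ω, hb, hq, h3']; exact h0'⟩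
  -- intervention events
  have hE' : {ω | B' ω = b ∧ Q' ω = q}
      = trip'⁻¹' (Set.univ ×ˢ (A1 s ×ˢ A2 s)) := by
    ext ω
    simp only [Set.mem_setOf_eq, Set.mem_preimage, Set.mem_prod, Set.mem_univ, true_and,
      htrip'def, hA1, hA2]
    constructor
    · rintro ⟨h1, h2⟩
      refine ⟨?_, ?_⟩
      · rw [hQ' ω, h1] at h2; exact h2
      · rw [hB' ω] at h1; exact h1
    · rintro ⟨h1, h2⟩
      have hb : B' ω = b := by rw [hB' ω]; exact h2
      exact ⟨hb, by rw [hQ' ω, hb]; exact h1⟩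
  have hX : ∀ s', {ω | B' ω = b ∧ Q' ω = q} ∩ {ω | H' ω = h} ∩ {ω | σ ω = s'}
      = σ⁻¹' {s'} ∩ trip'⁻¹' (A0 s' ×ˢ (A1 s ×ˢ A2 s)) := by
    intro s'; ext ω
    simp only [Set.mem_inter_iff, Set.mem_setOf_eq, Set.mem_preimage, Set.mem_prod,
      Set.mem_singleton_iff, htrip'def, hA0, hA1, hA2]
    constructor
    · rintro ⟨⟨⟨h1, h2⟩, h4⟩, h5⟩
      have hb : B' ω = b := h1
      refine ⟨h5, ?_, ?_, ?_⟩
      · rw [hH' ω, h1, h2, h5] at h4; exact h4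
      · rw [hQ' ω, h1] at h2; exact h2
      · rw [hB' ω] at h1; exact h1
    · rintro ⟨h5, h0', h1, h2⟩
      have hb : B' ω = b := by rw [hB' ω]; exact h2
      have hq : Q' ω = q := by rw [hQ' ω, hb]; exact h1
      exact ⟨⟨⟨hb, hq⟩, by rw [hH' ω, hb, hq, h5]; exact h0'⟩, h5⟩
  -- abbreviations for the numbers
  set a : Fin 2 → ENNReal := fun s' => μ ((ε 0)⁻¹' A0 s') with ha
  set c1 : Fin 2 → ENNReal := fun t => μ ((ε 1)⁻¹' A1 t) with hc1
  set c2 : Fin 2 → ENNReal := fun t => μ ((ε 2)⁻¹' A2 t) with hc2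
  set d : Fin 2 → ENNReal := fun s' => μ ((ε 3)⁻¹' A3 s') with hd
  set w : Fin 2 → ENNReal := fun s' => μ {ω | σ ω = s'} with hw
  -- measure of the observational events
  have measF : ∀ s', μ {ω | B ω = b ∧ Q ω = q ∧ S ω = s'} = c1 s' * (c2 s' * d s') := by
    intro s'
    have : {ω | B ω = b ∧ Q ω = q ∧ S ω = s'}
        = (ε 0)⁻¹' Set.univ ∩ ((ε 1)⁻¹' A1 s' ∩ ((ε 2)⁻¹' A2 s' ∩ (ε 3)⁻¹' A3 s')) := by
      rw [hF s']; simp [Set.inter_assoc]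
    rw [this, key _ _ _ _ MeasurableSet.univ (mA1 s') (mA2 s') (mA3 s')]
    simp
    rfl
  have measFH : ∀ s', μ ({ω | B ω = b ∧ Q ω = q ∧ S ω = s'} ∩ {ω | H ω = h})
      = a s' * (c1 s' * (c2 s' * d s')) := by
    intro s'
    rw [hFH s', key _ _ _ _ (mA0 s') (mA1 s') (mA2 s') (mA3 s')]
  -- measure of the intervention events
  have trip_pre : ∀ (T0 T1 T2 : Set ℝ),
      trip⁻¹' (T0 ×ˢ (T1 ×ˢ T2))
        = (ε 0)⁻¹' T0 ∩ ((ε 1)⁻¹' T1 ∩ ((ε 2)⁻¹' T2 ∩ (ε 3)⁻¹' Set.univ)) := by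
    intro T0 T1 T2; ext ω
    simp [htripdef, Set.mem_prod]
  have measE' : μ {ω | B' ω = b ∧ Q' ω = q} = c1 s * c2 s := by
    rw [hE', hmap _ (MeasurableSet.univ.prod ((mA1 s).prod (mA2 s))), trip_pre,
      key _ _ _ _ MeasurableSet.univ (mA1 s) (mA2 s) MeasurableSet.univ]
    simp
    rfl
  have measX : ∀ s', μ ({ω | B' ω = b ∧ Q' ω = q} ∩ {ω | H' ω = h} ∩ {ω | σ ω = s'})
      = w s' * (a s' * (c1 s * c2 s)) := by
    intro s'
    have hT : MeasurableSet (A0 s' ×ˢ (A1 s ×ˢ A2 s)) :=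
      (mA0 s').prod ((mA1 s).prod (mA2 s))
    rw [hX s', hσindep.measure_inter_preimage_eq_mul _ _ (measurableSet_singleton s') hT]
    rw [hmap _ hT, trip_pre, key _ _ _ _ (mA0 s') (mA1 s) (mA2 s) MeasurableSet.univ]
    simp only [Set.preimage_univ, measure_univ, mul_one]
    rfl
  -- decompose the intervention event over σ
  have mE' : MeasurableSet {ω | B' ω = b ∧ Q' ω = q} := by
    rw [hE']; exact mtrip' (MeasurableSet.univ.prod ((mA1 s).prod (mA2 s)))
  have measE'H : μ ({ω | B' ω = b ∧ Q' ω = q} ∩ {ω | H' ω = h})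
      = w 0 * (a 0 * (c1 s * c2 s)) + w 1 * (a 1 * (c1 s * c2 s)) := by
    have hsplit : {ω | B' ω = b ∧ Q' ω = q} ∩ {ω | H' ω = h}
        = ({ω | B' ω = b ∧ Q' ω = q} ∩ {ω | H' ω = h} ∩ {ω | σ ω = 0})
          ∪ ({ω | B' ω = b ∧ Q' ω = q} ∩ {ω | H' ω = h} ∩ {ω | σ ω = 1}) := by
      ext ω
      simp only [Set.mem_union, Set.mem_inter_iff, Set.mem_setOf_eq]
      have : σ ω = 0 ∨ σ ω = 1 := by omega
      tauto
    have hdisj : Disjoint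
        ({ω | B' ω = b ∧ Q' ω = q} ∩ {ω | H' ω = h} ∩ {ω | σ ω = 0})
        ({ω | B' ω = b ∧ Q' ω = q} ∩ {ω | H' ω = h} ∩ {ω | σ ω = 1}) := by
      rw [Set.disjoint_left]
      rintro ω ⟨-, h0⟩ ⟨-, h1⟩
      simp only [Set.mem_setOf_eq] at h0 h1
      rw [h0] at h1; exact absurd h1 (by decide)
    have hm1 : MeasurableSet
        ({ω | B' ω = b ∧ Q' ω = q} ∩ {ω | H' ω = h} ∩ {ω | σ ω = 1}) := by
      rw [hX 1]
      exact (hσ (measurableSet_singleton 1)).inter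
        (mtrip' ((mA0 1).prod ((mA1 s).prod (mA2 s))))
    rw [hsplit, measure_union hdisj hm1, measX 0, measX 1]
  -- finiteness and positivity facts
  have hc12 : c1 s * c2 s ≠ 0 := by
    rw [← measE']; exact hpos'.ne'
  have hc12top : c1 s * c2 s ≠ ⊤ := by
    rw [← measE']; exact measure_ne_top μ _
  -- compute the left-hand side
  have LHS : μ[|{ω | B' ω = b ∧ Q' ω = q}] {ω | H' ω = h}
      = a 0 * w 0 + a 1 * w 1 := by
    rw [cond_apply mE', measE', measE'H]
    rw [show w 0 * (a 0 * (c1 s * c2 s)) + w 1 * (a 1 * (c1 s * c2 s))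
        = (c1 s * c2 s) * (a 0 * w 0 + a 1 * w 1) by ring]
    rw [← mul_assoc, ENNReal.inv_mul_cancel hc12 hc12top, one_mul]
  rw [LHS, tsum_fintype, Fin.sum_univ_two]
  -- compute each term of the right-hand side
  have term : ∀ s' : Fin 2,
      μ[|{ω | B ω = b ∧ Q ω = q ∧ S ω = s'}] {ω | H ω = h} * w s' = a s' * w s' := by
    intro s'
    rcases eq_or_ne (w s') 0 with h0 | h0
    · rw [h0, mul_zero, mul_zero]
    · have hw' : 0 < μ {ω | σ ω = s'} := pos_iff_ne_zero.mpr h0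
      have hFpos := hpos s' hw'
      have mF : MeasurableSet {ω | B ω = b ∧ Q ω = q ∧ S ω = s'} := by
        rw [hF s']
        exact ((hε 1) (mA1 s')).inter (((hε 2) (mA2 s')).inter ((hε 3) (mA3 s')))
      have hy : (c1 s' * (c2 s' * d s')) ≠ 0 := by
        rw [← measF s']; exact hFpos.ne'
      have hytop : (c1 s' * (c2 s' * d s')) ≠ ⊤ := by
        rw [← measF s']; exact measure_ne_top μ _
      rw [cond_apply mF, measF s', measFH s', mul_comm (a s') _, ← mul_assoc,
        ENNReal.inv_mul_cancel hy hytop, one_mul]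
  rw [term 0, term 1]
end
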